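/- arXiv:2601.21023 — 4 statements merged into one kernel-verified Lean document; each statement's English description precedes it below -/
import Mathlib

section
/- Let μ ∈ (0,1). Suppose Z⁽¹⁾, Z⁽²⁾ are random variables in [-1,1] with means m⁽¹⁾, m⁽²⁾ and laws ρ⁽¹⁾, ρ⁽²⁾, and define Q₊[ρ⁽ⁱ⁾] as the law of μ(2Bⁱ - 1) + (1-μ)Zⁱ, where Bⁱ ~ Bernoulli((1-m⁽ⁱ⁾)/2) is independent of Zⁱ. Then the 1-Wasserstein distance satisfies W₁(Q₊[ρ⁽¹⁾], Q₊[ρ⁽²⁾]) ≤ μ|m⁽¹⁾ - m⁽²⁾| + (1-μ) W₁(ρ⁽¹⁾, ρ⁽²⁾). -/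
open MeasureTheory ProbabilityTheory

/-- The Bernoulli law with parameter `p`, seen as a probability measure on `ℝ`
(mass `p` at `1` and mass `1 - p` at `0`). -/
noncomputable def bernoulliReal (p : ℝ) : Measure ℝ :=
  (ENNReal.ofReal p) • Measure.dirac 1 + (ENNReal.ofReal (1 - p)) • Measure.dirac 0

/-- The 1-Wasserstein distance between two probability measures on `ℝ`, defined as the
infimum of `∫ |x - y| dπ` over all couplings `π`. -/
noncomputable def W1 (μ ν : Measure ℝ) : ℝ :=
  sInf {c : ℝ | ∃ π : Measure (ℝ × ℝ), IsProbabilityMeasure π ∧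
    π.map Prod.fst = μ ∧ π.map Prod.snd = ν ∧ c = ∫ p, |p.1 - p.2| ∂π}

noncomputable def bernCoup (p q : ℝ) : Measure (ℝ × ℝ) :=
  ENNReal.ofReal (min p q) • Measure.dirac (1, 1)
  + ENNReal.ofReal (min (1 - p) (1 - q)) • Measure.dirac (0, 0)
  + ENNReal.ofReal (p - q) • Measure.dirac (1, 0)
  + ENNReal.ofReal (q - p) • Measure.dirac (0, 1)

lemma bernCoup_fst (p q : ℝ) (hp0 : 0 ≤ p) (hp1 : p ≤ 1) (hq0 : 0 ≤ q) (hq1 : q ≤ 1) :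
    (bernCoup p q).map Prod.fst = bernoulliReal p := by
  rw [bernCoup, bernoulliReal]
  rw [Measure.map_add _ _ measurable_fst, Measure.map_add _ _ measurable_fst,
    Measure.map_add _ _ measurable_fst, Measure.map_smul, Measure.map_smul,
    Measure.map_smul, Measure.map_smul, Measure.map_dirac' measurable_fst,
    Measure.map_dirac' measurable_fst, Measure.map_dirac' measurable_fst,
    Measure.map_dirac' measurable_fst]
  simp only []
  rcases le_total p q with h | h
  · have e1 : ENNReal.ofReal (p - q) = 0 := ENNReal.ofReal_of_nonpos (by linarith)
    rw [min_eq_left h, min_eq_right (show (1:ℝ) - q ≤ 1 - p by linarith), e1,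
      zero_smul, add_zero]
    have : ENNReal.ofReal (1 - p) = ENNReal.ofReal (1 - q) + ENNReal.ofReal (q - p) := by
      rw [← ENNReal.ofReal_add (by linarith) (by linarith)]; ring_nf
    rw [this, add_smul]; abel
  · have e1 : ENNReal.ofReal (q - p) = 0 := ENNReal.ofReal_of_nonpos (by linarith)
    rw [min_eq_right h, min_eq_left (show (1:ℝ) - p ≤ 1 - q by linarith), e1,
      zero_smul, add_zero]
    have : ENNReal.ofReal p = ENNReal.ofReal q + ENNReal.ofReal (p - q) := by
      rw [← ENNReal.ofReal_add (by linarith) (by linarith)]; ring_nf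
    rw [this, add_smul]
    abel

lemma bernCoup_snd (p q : ℝ) (hp0 : 0 ≤ p) (hp1 : p ≤ 1) (hq0 : 0 ≤ q) (hq1 : q ≤ 1) :
    (bernCoup p q).map Prod.snd = bernoulliReal q := by
  rw [bernCoup, bernoulliReal]
  rw [Measure.map_add _ _ measurable_snd, Measure.map_add _ _ measurable_snd,
    Measure.map_add _ _ measurable_snd, Measure.map_smul, Measure.map_smul,
    Measure.map_smul, Measure.map_smul, Measure.map_dirac' measurable_snd,
    Measure.map_dirac' measurable_snd, Measure.map_dirac' measurable_snd,
    Measure.map_dirac' measurable_snd]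
  simp only []
  rcases le_total p q with h | h
  · have e1 : ENNReal.ofReal (p - q) = 0 := ENNReal.ofReal_of_nonpos (by linarith)
    rw [min_eq_left h, min_eq_right (show (1:ℝ) - q ≤ 1 - p by linarith), e1,
      zero_smul, add_zero]
    have : ENNReal.ofReal q = ENNReal.ofReal p + ENNReal.ofReal (q - p) := by
      rw [← ENNReal.ofReal_add (by linarith) (by linarith)]; ring_nf
    rw [this, add_smul]
    abel
  · have e1 : ENNReal.ofReal (q - p) = 0 := ENNReal.ofReal_of_nonpos (by linarith)
    rw [min_eq_right h, min_eq_left (show (1:ℝ) - p ≤ 1 - q by linarith), e1,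
      zero_smul, add_zero]
    have : ENNReal.ofReal (1 - q) = ENNReal.ofReal (1 - p) + ENNReal.ofReal (p - q) := by
      rw [← ENNReal.ofReal_add (by linarith) (by linarith)]; ring_nf
    rw [this, add_smul]; abel

lemma bernoulliReal_univ (p : ℝ) (hp0 : 0 ≤ p) (hp1 : p ≤ 1) :
    bernoulliReal p Set.univ = 1 := by
  simp only [bernoulliReal, Measure.add_apply, Measure.smul_apply, Measure.dirac_apply,
    Set.mem_univ, Set.indicator_of_mem, Pi.one_apply, smul_eq_mul, mul_one]
  rw [← ENNReal.ofReal_add hp0 (by linarith)]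
  norm_num

lemma bernCoup_prob (p q : ℝ) (hp0 : 0 ≤ p) (hp1 : p ≤ 1) (hq0 : 0 ≤ q) (hq1 : q ≤ 1) :
    IsProbabilityMeasure (bernCoup p q) := by
  constructor
  have h1 : (bernCoup p q).map Prod.fst Set.univ = bernCoup p q Set.univ := by
    rw [Measure.map_apply measurable_fst MeasurableSet.univ, Set.preimage_univ]
  rw [← h1, bernCoup_fst p q hp0 hp1 hq0 hq1, bernoulliReal_univ p hp0 hp1]

lemma bernCoup_ae (p q : ℝ) : ∀ᵐ x ∂(bernCoup p q), |x.1 - x.2| ≤ 1 := by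
  rw [ae_iff]
  simp only [bernCoup, Measure.add_apply, Measure.smul_apply, Measure.dirac_apply,
    Set.indicator_apply, Set.mem_setOf_eq]
  norm_num

lemma bernCoup_cost (p q : ℝ) : ∫ x, |x.1 - x.2| ∂(bernCoup p q) = |p - q| := by
  have hm : Measurable fun x : ℝ × ℝ => |x.1 - x.2| := (measurable_fst.sub measurable_snd).abs
  have hdir : ∀ y : ℝ × ℝ, Integrable (fun x : ℝ × ℝ => |x.1 - x.2|) (Measure.dirac y) := by
    intro y
    refine ⟨hm.aestronglyMeasurable, ?_⟩
    rw [HasFiniteIntegral, lintegral_dirac]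
    exact ENNReal.coe_lt_top
  have hs : ∀ (c : ℝ) (y : ℝ × ℝ),
      Integrable (fun x : ℝ × ℝ => |x.1 - x.2|) (ENNReal.ofReal c • Measure.dirac y) :=
    fun c y => (hdir y).smul_measure ENNReal.ofReal_ne_top
  rw [bernCoup, integral_add_measure (((hs _ _).add_measure (hs _ _)).add_measure (hs _ _)) (hs _ _),
    integral_add_measure ((hs _ _).add_measure (hs _ _)) (hs _ _),
    integral_add_measure (hs _ _) (hs _ _),
    integral_smul_measure, integral_smul_measure, integral_smul_measure, integral_smul_measure,
    integral_dirac, integral_dirac, integral_dirac, integral_dirac]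
  simp only [smul_eq_mul]
  norm_num
  rw [ENNReal.toReal_ofReal', ENNReal.toReal_ofReal']
  rcases le_total p q with h | h
  · rw [abs_of_nonpos (by linarith), max_eq_right (by linarith), max_eq_left (by linarith)]; ring
  · rw [abs_of_nonneg (by linarith), max_eq_left (by linarith), max_eq_right (by linarith)]; ring

lemma coupling_bound (μ p q : ℝ) (hμ0 : 0 ≤ μ) (hμ1 : μ ≤ 1)
    (hp0 : 0 ≤ p) (hp1 : p ≤ 1) (hq0 : 0 ≤ q) (hq1 : q ≤ 1)
    (π : Measure (ℝ × ℝ)) [IsProbabilityMeasure π]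
    (hb1 : ∀ᵐ x ∂π, |x.1| ≤ 1) (hb2 : ∀ᵐ x ∂π, |x.2| ≤ 1) :
    ∃ γ : Measure (ℝ × ℝ), IsProbabilityMeasure γ ∧
      γ.map Prod.fst = ((bernoulliReal p).prod (π.map Prod.fst)).map
        (fun y : ℝ × ℝ => μ * (2 * y.1 - 1) + (1 - μ) * y.2) ∧
      γ.map Prod.snd = ((bernoulliReal q).prod (π.map Prod.snd)).map
        (fun y : ℝ × ℝ => μ * (2 * y.1 - 1) + (1 - μ) * y.2) ∧
      ∫ x, |x.1 - x.2| ∂γ ≤ 2 * μ * |p - q| + (1 - μ) * ∫ x, |x.1 - x.2| ∂π := by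
  classical
  set f2 : ℝ × ℝ → ℝ := fun y => μ * (2 * y.1 - 1) + (1 - μ) * y.2 with hf2def
  have hf2 : Measurable f2 := by
    apply Measurable.add
    · exact (measurable_const.mul ((measurable_const.mul measurable_fst).sub measurable_const))
    · exact measurable_const.mul measurable_snd
  set β : Measure (ℝ × ℝ) := bernCoup p q with hβdef
  haveI hβP : IsProbabilityMeasure β := bernCoup_prob p q hp0 hp1 hq0 hq1
  set Γ : Measure ((ℝ × ℝ) × (ℝ × ℝ)) := β.prod π with hΓdef
  haveI : IsProbabilityMeasure Γ := by rw [hΓdef]; infer_instance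
  set F : (ℝ × ℝ) × (ℝ × ℝ) → ℝ × ℝ :=
    fun x => (f2 (x.1.1, x.2.1), f2 (x.1.2, x.2.2)) with hFdef
  have hF : Measurable F := by
    apply Measurable.prodMk
    · exact hf2.comp ((measurable_fst.fst).prodMk (measurable_snd.fst))
    · exact hf2.comp ((measurable_fst.snd).prodMk (measurable_snd.snd))
  refine ⟨Γ.map F, Measure.isProbabilityMeasure_map hF.aemeasurable, ?_, ?_, ?_⟩
  · rw [Measure.map_map measurable_fst hF]
    have : (Prod.fst ∘ F) = f2 ∘ (Prod.map Prod.fst Prod.fst) := rfl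
    rw [this, ← Measure.map_map hf2 (measurable_fst.prodMap measurable_fst),
      ← Measure.map_prod_map _ _ measurable_fst measurable_fst,
      bernCoup_fst p q hp0 hp1 hq0 hq1]
  · rw [Measure.map_map measurable_snd hF]
    have : (Prod.snd ∘ F) = f2 ∘ (Prod.map Prod.snd Prod.snd) := rfl
    rw [this, ← Measure.map_map hf2 (measurable_snd.prodMap measurable_snd),
      ← Measure.map_prod_map _ _ measurable_snd measurable_snd,
      bernCoup_snd p q hp0 hp1 hq0 hq1]
  · have hm : Measurable fun x : ℝ × ℝ => |x.1 - x.2| := (measurable_fst.sub measurable_snd).abs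
    rw [integral_map hF.aemeasurable hm.aestronglyMeasurable]
    -- a.e. bounds on Γ
    have hβbd : ∀ᵐ x ∂Γ, |x.1.1 - x.1.2| ≤ 1 := by
      rw [ae_iff]
      have hset : {x : (ℝ × ℝ) × (ℝ × ℝ) | ¬ |x.1.1 - x.1.2| ≤ 1}
          = {y : ℝ × ℝ | ¬ |y.1 - y.2| ≤ 1} ×ˢ Set.univ := by
        ext x; simp [Set.mem_prod]
      rw [hset, hΓdef, Measure.prod_prod]
      have h0 : β {y : ℝ × ℝ | ¬ |y.1 - y.2| ≤ 1} = 0 := by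
        have := bernCoup_ae p q
        rw [ae_iff] at this
        exact this
      rw [h0, zero_mul]
    have hπbd : ∀ᵐ x ∂Γ, |x.2.1 - x.2.2| ≤ 2 := by
      rw [ae_iff]
      have h0 : π {y : ℝ × ℝ | ¬ |y.1 - y.2| ≤ 2} = 0 := by
        have : ∀ᵐ y ∂π, |y.1 - y.2| ≤ 2 := by
          filter_upwards [hb1, hb2] with y h1 h2
          calc |y.1 - y.2| ≤ |y.1| + |y.2| := abs_sub _ _
            _ ≤ 2 := by linarith
        rw [ae_iff] at this; exact this
      have hset : {x : (ℝ × ℝ) × (ℝ × ℝ) | ¬ |x.2.1 - x.2.2| ≤ 2}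
          = Set.univ ×ˢ {y : ℝ × ℝ | ¬ |y.1 - y.2| ≤ 2} := by
        ext x; simp [Set.mem_prod]
      rw [hset, hΓdef, Measure.prod_prod, h0, mul_zero]
    have hmeas1 : Measurable fun x : (ℝ × ℝ) × (ℝ × ℝ) => |x.1.1 - x.1.2| :=
      (measurable_fst.fst.sub measurable_fst.snd).abs
    have hmeas2 : Measurable fun x : (ℝ × ℝ) × (ℝ × ℝ) => |x.2.1 - x.2.2| :=
      (measurable_snd.fst.sub measurable_snd.snd).abs
    have hInt1 : Integrable (fun x : (ℝ × ℝ) × (ℝ × ℝ) => |x.1.1 - x.1.2|) Γ := by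
      refine Integrable.mono' (integrable_const 1) hmeas1.aestronglyMeasurable ?_
      filter_upwards [hβbd] with x hx
      simpa [abs_abs] using hx
    have hInt2 : Integrable (fun x : (ℝ × ℝ) × (ℝ × ℝ) => |x.2.1 - x.2.2|) Γ := by
      refine Integrable.mono' (integrable_const 2) hmeas2.aestronglyMeasurable ?_
      filter_upwards [hπbd] with x hx
      simpa [abs_abs] using hx
    have hIntg : Integrable (fun x : (ℝ × ℝ) × (ℝ × ℝ) =>
        2 * μ * |x.1.1 - x.1.2| + (1 - μ) * |x.2.1 - x.2.2|) Γ :=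
      (hInt1.const_mul _).add (hInt2.const_mul _)
    have hmono : ∫ x, |(F x).1 - (F x).2| ∂Γ ≤ ∫ x,
        (2 * μ * |x.1.1 - x.1.2| + (1 - μ) * |x.2.1 - x.2.2|) ∂Γ := by
      refine integral_mono_of_nonneg (Filter.Eventually.of_forall fun x => abs_nonneg _) hIntg
        (Filter.Eventually.of_forall fun x => ?_)
      show |(F x).1 - (F x).2| ≤ 2 * μ * |x.1.1 - x.1.2| + (1 - μ) * |x.2.1 - x.2.2|
      have : (F x).1 - (F x).2
          = 2 * μ * (x.1.1 - x.1.2) + (1 - μ) * (x.2.1 - x.2.2) := by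
        simp only [hFdef, hf2def]; ring
      rw [this]
      calc |2 * μ * (x.1.1 - x.1.2) + (1 - μ) * (x.2.1 - x.2.2)|
          ≤ |2 * μ * (x.1.1 - x.1.2)| + |(1 - μ) * (x.2.1 - x.2.2)| := abs_add_le _ _
        _ = 2 * μ * |x.1.1 - x.1.2| + (1 - μ) * |x.2.1 - x.2.2| := by
            rw [abs_mul (2 * μ), abs_mul (1 - μ), abs_of_nonneg (by linarith : (0:ℝ) ≤ 2 * μ),
              abs_of_nonneg (by linarith : (0:ℝ) ≤ 1 - μ)]
    refine hmono.trans (le_of_eq ?_)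
    rw [integral_add (hInt1.const_mul _) (hInt2.const_mul _), integral_const_mul,
      integral_const_mul]
    have e1 : ∫ x : (ℝ × ℝ) × (ℝ × ℝ), |x.1.1 - x.1.2| ∂Γ = ∫ y, |y.1 - y.2| ∂β := by
      have h1 : Γ.map Prod.fst = β := by
        rw [hΓdef, Measure.map_fst_prod, measure_univ, one_smul]
      rw [← h1, integral_map measurable_fst.aemeasurable hm.aestronglyMeasurable]
    have e2 : ∫ x : (ℝ × ℝ) × (ℝ × ℝ), |x.2.1 - x.2.2| ∂Γ = ∫ y, |y.1 - y.2| ∂π := by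
      have h1 : Γ.map Prod.snd = π := by
        rw [hΓdef, Measure.map_snd_prod, measure_univ, one_smul]
      rw [← h1, integral_map measurable_snd.aemeasurable hm.aestronglyMeasurable]
    rw [e1, e2, hβdef, bernCoup_cost]

theorem stmt8 {Ω : Type*} [MeasureSpace Ω] [IsProbabilityMeasure (ℙ : Measure Ω)]
    (μ : ℝ) (hμ : μ ∈ Set.Ioo (0:ℝ) 1)
    (Z₁ Z₂ B₁ B₂ : Ω → ℝ) (hZ₁ : Measurable Z₁) (hZ₂ : Measurable Z₂)
    (hB₁ : Measurable B₁) (hB₂ : Measurable B₂)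
    (hZ₁b : ∀ ω, Z₁ ω ∈ Set.Icc (-1:ℝ) 1) (hZ₂b : ∀ ω, Z₂ ω ∈ Set.Icc (-1:ℝ) 1)
    (m₁ m₂ : ℝ) (hm₁ : m₁ = ∫ ω, Z₁ ω) (hm₂ : m₂ = ∫ ω, Z₂ ω)
    (hB₁law : Measure.map B₁ ℙ = bernoulliReal ((1 - m₁) / 2))
    (hB₂law : Measure.map B₂ ℙ = bernoulliReal ((1 - m₂) / 2))
    (hind₁ : IndepFun B₁ Z₁ ℙ) (hind₂ : IndepFun B₂ Z₂ ℙ) :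
    W1 (Measure.map (fun ω => μ * (2 * B₁ ω - 1) + (1 - μ) * Z₁ ω) ℙ)
       (Measure.map (fun ω => μ * (2 * B₂ ω - 1) + (1 - μ) * Z₂ ω) ℙ)
      ≤ μ * |m₁ - m₂| + (1 - μ) * W1 (Measure.map Z₁ ℙ) (Measure.map Z₂ ℙ) := by
  obtain ⟨hμ0, hμ1⟩ := hμ
  have h1μ : (0:ℝ) < 1 - μ := by linarith
  set f2 : ℝ × ℝ → ℝ := fun y => μ * (2 * y.1 - 1) + (1 - μ) * y.2 with hf2def
  have hf2 : Measurable f2 :=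
    ((measurable_const.mul ((measurable_const.mul measurable_fst).sub measurable_const)).add
      (measurable_const.mul measurable_snd))
  -- integrability and mean bounds
  have hZ₁i : Integrable Z₁ ℙ :=
    Integrable.mono' (integrable_const 1) hZ₁.aestronglyMeasurable
      (Filter.Eventually.of_forall fun ω => by
        rw [Real.norm_eq_abs]; exact abs_le.mpr ⟨(hZ₁b ω).1, (hZ₁b ω).2⟩)
  have hZ₂i : Integrable Z₂ ℙ :=
    Integrable.mono' (integrable_const 1) hZ₂.aestronglyMeasurable
      (Filter.Eventually.of_forall fun ω => by
        rw [Real.norm_eq_abs]; exact abs_le.mpr ⟨(hZ₂b ω).1, (hZ₂b ω).2⟩)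
  have hm₁b : |m₁| ≤ 1 := by
    rw [hm₁]
    have h1 : |∫ ω, Z₁ ω| ≤ ∫ ω, |Z₁ ω| := by
      simpa [Real.norm_eq_abs] using norm_integral_le_integral_norm (μ := ℙ) Z₁
    have h2 : ∫ ω, |Z₁ ω| ≤ ∫ _ω : Ω, (1:ℝ) := integral_mono hZ₁i.abs (integrable_const 1)
      (fun ω => abs_le.mpr ⟨(hZ₁b ω).1, (hZ₁b ω).2⟩)
    have h3 : ∫ _ω : Ω, (1:ℝ) = 1 := by simp
    linarith
  have hm₂b : |m₂| ≤ 1 := by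
    rw [hm₂]
    have h1 : |∫ ω, Z₂ ω| ≤ ∫ ω, |Z₂ ω| := by
      simpa [Real.norm_eq_abs] using norm_integral_le_integral_norm (μ := ℙ) Z₂
    have h2 : ∫ ω, |Z₂ ω| ≤ ∫ _ω : Ω, (1:ℝ) := integral_mono hZ₂i.abs (integrable_const 1)
      (fun ω => abs_le.mpr ⟨(hZ₂b ω).1, (hZ₂b ω).2⟩)
    have h3 : ∫ _ω : Ω, (1:ℝ) = 1 := by simp
    linarith
  have hm₁b' := abs_le.mp hm₁b
  have hm₂b' := abs_le.mp hm₂b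
  set p : ℝ := (1 - m₁) / 2 with hpdef
  set q : ℝ := (1 - m₂) / 2 with hqdef
  have hp0 : 0 ≤ p := by rw [hpdef]; linarith [hm₁b'.2]
  have hp1 : p ≤ 1 := by rw [hpdef]; linarith [hm₁b'.1]
  have hq0 : 0 ≤ q := by rw [hqdef]; linarith [hm₂b'.2]
  have hq1 : q ≤ 1 := by rw [hqdef]; linarith [hm₂b'.1]
  set ρ₁ : Measure ℝ := Measure.map Z₁ ℙ with hρ₁def
  set ρ₂ : Measure ℝ := Measure.map Z₂ ℙ with hρ₂def
  haveI : IsProbabilityMeasure ρ₁ := Measure.isProbabilityMeasure_map hZ₁.aemeasurable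
  haveI : IsProbabilityMeasure ρ₂ := Measure.isProbabilityMeasure_map hZ₂.aemeasurable
  -- output law identification
  have hout₁ : Measure.map (fun ω => μ * (2 * B₁ ω - 1) + (1 - μ) * Z₁ ω) ℙ
      = ((bernoulliReal p).prod ρ₁).map f2 := by
    have hpair : Measure.map (fun ω => (B₁ ω, Z₁ ω)) ℙ = (Measure.map B₁ ℙ).prod (Measure.map Z₁ ℙ) :=
      (indepFun_iff_map_prod_eq_prod_map_map hB₁.aemeasurable hZ₁.aemeasurable).mp hind₁
    have hcomp : (fun ω => μ * (2 * B₁ ω - 1) + (1 - μ) * Z₁ ω)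
        = f2 ∘ (fun ω => (B₁ ω, Z₁ ω)) := rfl
    rw [hcomp, ← Measure.map_map hf2 (hB₁.prodMk hZ₁), hpair, hB₁law]
  have hout₂ : Measure.map (fun ω => μ * (2 * B₂ ω - 1) + (1 - μ) * Z₂ ω) ℙ
      = ((bernoulliReal q).prod ρ₂).map f2 := by
    have hpair : Measure.map (fun ω => (B₂ ω, Z₂ ω)) ℙ = (Measure.map B₂ ℙ).prod (Measure.map Z₂ ℙ) :=
      (indepFun_iff_map_prod_eq_prod_map_map hB₂.aemeasurable hZ₂.aemeasurable).mp hind₂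
    have hcomp : (fun ω => μ * (2 * B₂ ω - 1) + (1 - μ) * Z₂ ω)
        = f2 ∘ (fun ω => (B₂ ω, Z₂ ω)) := rfl
    rw [hcomp, ← Measure.map_map hf2 (hB₂.prodMk hZ₂), hpair, hB₂law]
  set A₁ : Measure ℝ := Measure.map (fun ω => μ * (2 * B₁ ω - 1) + (1 - μ) * Z₁ ω) ℙ
  set A₂ : Measure ℝ := Measure.map (fun ω => μ * (2 * B₂ ω - 1) + (1 - μ) * Z₂ ω) ℙ
  set T : Set ℝ := {c : ℝ | ∃ π : Measure (ℝ × ℝ), IsProbabilityMeasure π ∧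
    π.map Prod.fst = A₁ ∧ π.map Prod.snd = A₂ ∧ c = ∫ x, |x.1 - x.2| ∂π} with hTdef
  set S : Set ℝ := {c : ℝ | ∃ π : Measure (ℝ × ℝ), IsProbabilityMeasure π ∧
    π.map Prod.fst = ρ₁ ∧ π.map Prod.snd = ρ₂ ∧ c = ∫ x, |x.1 - x.2| ∂π} with hSdef
  have hW1T : W1 A₁ A₂ = sInf T := rfl
  have hW1S : W1 ρ₁ ρ₂ = sInf S := rfl
  have hTbdd : BddBelow T := by
    refine ⟨0, fun c hc => ?_⟩
    obtain ⟨π, hπP, -, -, rfl⟩ := hc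
    exact integral_nonneg fun x => abs_nonneg _
  have hSne : S.Nonempty := by
    refine ⟨∫ x, |x.1 - x.2| ∂(ρ₁.prod ρ₂), ρ₁.prod ρ₂, inferInstance, ?_, ?_, rfl⟩
    · rw [Measure.map_fst_prod, measure_univ, one_smul]
    · rw [Measure.map_snd_prod, measure_univ, one_smul]
  have key : ∀ c ∈ S, W1 A₁ A₂ ≤ μ * |m₁ - m₂| + (1 - μ) * c := by
    rintro c ⟨π, hπP, hπ1, hπ2, rfl⟩
    haveI := hπP
    have hbset : MeasurableSet {t : ℝ | ¬ |t| ≤ 1} :=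
      (measurableSet_le measurable_abs measurable_const).compl
    have hb1 : ∀ᵐ x ∂π, |x.1| ≤ 1 := by
      rw [ae_iff]
      have hset : {x : ℝ × ℝ | ¬ |x.1| ≤ 1} = Prod.fst ⁻¹' {t : ℝ | ¬ |t| ≤ 1} := rfl
      rw [hset, ← Measure.map_apply measurable_fst hbset, hπ1, hρ₁def,
        Measure.map_apply hZ₁ hbset]
      have : Z₁ ⁻¹' {t : ℝ | ¬ |t| ≤ 1} = ∅ := by
        ext ω
        simp [abs_le.mpr ⟨(hZ₁b ω).1, (hZ₁b ω).2⟩]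
      rw [this, measure_empty]
    have hb2 : ∀ᵐ x ∂π, |x.2| ≤ 1 := by
      rw [ae_iff]
      have hset : {x : ℝ × ℝ | ¬ |x.2| ≤ 1} = Prod.snd ⁻¹' {t : ℝ | ¬ |t| ≤ 1} := rfl
      rw [hset, ← Measure.map_apply measurable_snd hbset, hπ2, hρ₂def,
        Measure.map_apply hZ₂ hbset]
      have : Z₂ ⁻¹' {t : ℝ | ¬ |t| ≤ 1} = ∅ := by
        ext ω
        simp [abs_le.mpr ⟨(hZ₂b ω).1, (hZ₂b ω).2⟩]
      rw [this, measure_empty]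
    obtain ⟨γ, hγP, hγ1, hγ2, hγc⟩ :=
      coupling_bound μ p q hμ0.le hμ1.le hp0 hp1 hq0 hq1 π hb1 hb2
    have hmem : (∫ x, |x.1 - x.2| ∂γ) ∈ T := by
      refine ⟨γ, hγP, ?_, ?_, rfl⟩
      · rw [hγ1, hπ1, hout₁]
      · rw [hγ2, hπ2, hout₂]
    have hle : W1 A₁ A₂ ≤ ∫ x, |x.1 - x.2| ∂γ := by
      rw [hW1T]; exact csInf_le hTbdd hmem
    have habs : |p - q| = |m₁ - m₂| / 2 := by
      rw [hpdef, hqdef]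
      rw [show (1 - m₁) / 2 - (1 - m₂) / 2 = (m₂ - m₁) / 2 by ring, abs_div,
        abs_sub_comm]
      norm_num
    refine hle.trans (hγc.trans (le_of_eq ?_))
    rw [habs]; ring
  have hfinal : ∀ c ∈ S, (W1 A₁ A₂ - μ * |m₁ - m₂|) / (1 - μ) ≤ c := by
    intro c hc
    rw [div_le_iff₀ h1μ]
    have := key c hc
    nlinarith
  have hcs : (W1 A₁ A₂ - μ * |m₁ - m₂|) / (1 - μ) ≤ W1 ρ₁ ρ₂ := by
    rw [hW1S]; exact le_csInf hSne hfinal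
  rw [div_le_iff₀ h1μ] at hcs
  nlinarith
end

section
/- Let μ ∈ (0,1). Suppose Z⁽¹⁾, Z⁽²⁾ are random variables in [-1,1] with means m⁽¹⁾, m⁽²⁾ and laws ρ⁽¹⁾, ρ⁽²⁾, and define Q₊[ρ⁽ⁱ⁾] as the law of μ(2Bⁱ - 1) + (1-μ)Zⁱ, where Bⁱ ~ Bernoulli((1-m⁽ⁱ⁾)/2) is independent of Zⁱ. Then W₂²(Q₊[ρ⁽¹⁾], Q₊[ρ⁽²⁾]) ≤ 2μ²|m⁽¹⁾ - m⁽²⁾| + (1-μ)² W₂²(ρ⁽¹⁾, ρ⁽²⁾). -/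
open MeasureTheory ProbabilityTheory

/-- The squared 2-Wasserstein distance between two probability measures on `ℝ`, defined as
the infimum of `∫ (x - y)² dπ` over all couplings `π`. -/
noncomputable def W2sq (μ ν : Measure ℝ) : ℝ :=
  sInf {c : ℝ | ∃ π : Measure (ℝ × ℝ), IsProbabilityMeasure π ∧
    π.map Prod.fst = μ ∧ π.map Prod.snd = ν ∧ c = ∫ p, (p.1 - p.2)^2 ∂π}

namespace Stmt9A

lemma integrable_dirac_real {α : Type*} [MeasurableSpace α] [MeasurableSingletonClass α]
    {f : α → ℝ} (hf : Measurable f) (a : α) : Integrable f (Measure.dirac a) := by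
  refine ⟨hf.aestronglyMeasurable, ?_⟩
  simp [HasFiniteIntegral, lintegral_dirac]

noncomputable def bcoup (p₁ p₂ : ℝ) : Measure (ℝ × ℝ) :=
  ENNReal.ofReal (min p₁ p₂) • Measure.dirac (1, 1)
  + ENNReal.ofReal (p₁ - min p₁ p₂) • Measure.dirac (1, 0)
  + ENNReal.ofReal (p₂ - min p₁ p₂) • Measure.dirac (0, 1)
  + ENNReal.ofReal (1 - max p₁ p₂) • Measure.dirac (0, 0)

lemma integrable_bcoup {p₁ p₂ : ℝ} {f : ℝ × ℝ → ℝ} (hf : Measurable f) :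
    Integrable f (bcoup p₁ p₂) := by
  unfold bcoup
  have I : ∀ (c : ℝ) (a : ℝ × ℝ), Integrable f (ENNReal.ofReal c • Measure.dirac a) :=
    fun c a => (integrable_dirac_real hf a).smul_measure ENNReal.ofReal_ne_top
  exact (((I _ _).add_measure (I _ _)).add_measure (I _ _)).add_measure (I _ _)

lemma integral_bcoup {p₁ p₂ : ℝ} (h₁ : p₁ ∈ Set.Icc (0:ℝ) 1) (h₂ : p₂ ∈ Set.Icc (0:ℝ) 1)
    {f : ℝ × ℝ → ℝ} (hf : Measurable f) :
    ∫ q, f q ∂(bcoup p₁ p₂) = min p₁ p₂ * f (1, 1) + (p₁ - min p₁ p₂) * f (1, 0)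
      + (p₂ - min p₁ p₂) * f (0, 1) + (1 - max p₁ p₂) * f (0, 0) := by
  have I : ∀ (c : ℝ) (a : ℝ × ℝ), Integrable f (ENNReal.ofReal c • Measure.dirac a) :=
    fun c a => (integrable_dirac_real hf a).smul_measure ENNReal.ofReal_ne_top
  have hw1 : (0:ℝ) ≤ min p₁ p₂ := le_min h₁.1 h₂.1
  have hw2 : (0:ℝ) ≤ p₁ - min p₁ p₂ := by simp [min_le_left]
  have hw3 : (0:ℝ) ≤ p₂ - min p₁ p₂ := by simp [min_le_right]
  have hw4 : (0:ℝ) ≤ 1 - max p₁ p₂ := by simp [max_le h₁.2 h₂.2]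
  unfold bcoup
  rw [integral_add_measure (((I _ _).add_measure (I _ _)).add_measure (I _ _)) (I _ _),
    integral_add_measure ((I _ _).add_measure (I _ _)) (I _ _),
    integral_add_measure (I _ _) (I _ _),
    integral_smul_measure, integral_smul_measure, integral_smul_measure, integral_smul_measure,
    integral_dirac, integral_dirac, integral_dirac, integral_dirac,
    ENNReal.toReal_ofReal hw1, ENNReal.toReal_ofReal hw2, ENNReal.toReal_ofReal hw3,
    ENNReal.toReal_ofReal hw4]
  simp [smul_eq_mul]

lemma isProb_bcoup {p₁ p₂ : ℝ} (h₁ : p₁ ∈ Set.Icc (0:ℝ) 1) (h₂ : p₂ ∈ Set.Icc (0:ℝ) 1) :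
    IsProbabilityMeasure (bcoup p₁ p₂) := by
  have hw1 : (0:ℝ) ≤ min p₁ p₂ := le_min h₁.1 h₂.1
  have hw2 : (0:ℝ) ≤ p₁ - min p₁ p₂ := by simp [min_le_left]
  have hw3 : (0:ℝ) ≤ p₂ - min p₁ p₂ := by simp [min_le_right]
  have hw4 : (0:ℝ) ≤ 1 - max p₁ p₂ := by simp [max_le h₁.2 h₂.2]
  constructor
  have hmm : min p₁ p₂ + max p₁ p₂ = p₁ + p₂ := min_add_max _ _
  simp only [bcoup, Measure.add_apply, Measure.smul_apply, Measure.dirac_apply_of_mem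
    (Set.mem_univ _), smul_eq_mul, mul_one]
  rw [← ENNReal.ofReal_add hw1 hw2, ← ENNReal.ofReal_add (by linarith) hw3,
    ← ENNReal.ofReal_add (by linarith) hw4,
    show min p₁ p₂ + (p₁ - min p₁ p₂) + (p₂ - min p₁ p₂) + (1 - max p₁ p₂) = 1 by linarith]
  exact ENNReal.ofReal_one

lemma bcoup_map_fst {p₁ p₂ : ℝ} (h₁ : p₁ ∈ Set.Icc (0:ℝ) 1) (h₂ : p₂ ∈ Set.Icc (0:ℝ) 1) :
    (bcoup p₁ p₂).map Prod.fst = bernoulliReal p₁ := by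
  have hw1 : (0:ℝ) ≤ min p₁ p₂ := le_min h₁.1 h₂.1
  have hw2 : (0:ℝ) ≤ p₁ - min p₁ p₂ := by simp [min_le_left]
  have hw3 : (0:ℝ) ≤ p₂ - min p₁ p₂ := by simp [min_le_right]
  have hw4 : (0:ℝ) ≤ 1 - max p₁ p₂ := by simp [max_le h₁.2 h₂.2]
  have hmm : min p₁ p₂ + max p₁ p₂ = p₁ + p₂ := min_add_max _ _
  unfold bcoup bernoulliReal
  rw [Measure.map_add _ _ measurable_fst, Measure.map_add _ _ measurable_fst,
    Measure.map_add _ _ measurable_fst, Measure.map_smul, Measure.map_smul, Measure.map_smul,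
    Measure.map_smul, Measure.map_dirac' measurable_fst, Measure.map_dirac' measurable_fst,
    Measure.map_dirac' measurable_fst, Measure.map_dirac' measurable_fst]
  show ENNReal.ofReal (min p₁ p₂) • Measure.dirac 1 + ENNReal.ofReal (p₁ - min p₁ p₂) • Measure.dirac 1
    + ENNReal.ofReal (p₂ - min p₁ p₂) • Measure.dirac 0 + ENNReal.ofReal (1 - max p₁ p₂) • Measure.dirac 0 = _
  rw [show ∀ (x y z w : Measure ℝ), x + y + z + w = (x + y) + (z + w) from fun _ _ _ _ => by abel,
    ← add_smul, ← add_smul, ← ENNReal.ofReal_add hw1 hw2, ← ENNReal.ofReal_add hw3 hw4,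
    show min p₁ p₂ + (p₁ - min p₁ p₂) = p₁ by ring,
    show p₂ - min p₁ p₂ + (1 - max p₁ p₂) = 1 - p₁ by linarith]

lemma bcoup_map_snd {p₁ p₂ : ℝ} (h₁ : p₁ ∈ Set.Icc (0:ℝ) 1) (h₂ : p₂ ∈ Set.Icc (0:ℝ) 1) :
    (bcoup p₁ p₂).map Prod.snd = bernoulliReal p₂ := by
  have hw1 : (0:ℝ) ≤ min p₁ p₂ := le_min h₁.1 h₂.1
  have hw2 : (0:ℝ) ≤ p₁ - min p₁ p₂ := by simp [min_le_left]
  have hw3 : (0:ℝ) ≤ p₂ - min p₁ p₂ := by simp [min_le_right]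
  have hw4 : (0:ℝ) ≤ 1 - max p₁ p₂ := by simp [max_le h₁.2 h₂.2]
  have hmm : min p₁ p₂ + max p₁ p₂ = p₁ + p₂ := min_add_max _ _
  unfold bcoup bernoulliReal
  rw [Measure.map_add _ _ measurable_snd, Measure.map_add _ _ measurable_snd,
    Measure.map_add _ _ measurable_snd, Measure.map_smul, Measure.map_smul, Measure.map_smul,
    Measure.map_smul, Measure.map_dirac' measurable_snd, Measure.map_dirac' measurable_snd,
    Measure.map_dirac' measurable_snd, Measure.map_dirac' measurable_snd]
  show ENNReal.ofReal (min p₁ p₂) • Measure.dirac 1 + ENNReal.ofReal (p₁ - min p₁ p₂) • Measure.dirac 0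
    + ENNReal.ofReal (p₂ - min p₁ p₂) • Measure.dirac 1 + ENNReal.ofReal (1 - max p₁ p₂) • Measure.dirac 0 = _
  rw [show ∀ (x y z w : Measure ℝ), x + y + z + w = (x + z) + (y + w) from fun _ _ _ _ => by abel,
    ← add_smul, ← add_smul, ← ENNReal.ofReal_add hw1 hw3, ← ENNReal.ofReal_add hw2 hw4,
    show min p₁ p₂ + (p₂ - min p₁ p₂) = p₂ by ring,
    show p₁ - min p₁ p₂ + (1 - max p₁ p₂) = 1 - p₂ by linarith]

end Stmt9A

open Stmt9A

set_option maxHeartbeats 1000000 in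
theorem stmt9 {Ω : Type*} [MeasureSpace Ω] [IsProbabilityMeasure (ℙ : Measure Ω)]
    (μ : ℝ) (hμ : μ ∈ Set.Ioo (0:ℝ) 1)
    (Z₁ Z₂ B₁ B₂ : Ω → ℝ) (hZ₁ : Measurable Z₁) (hZ₂ : Measurable Z₂)
    (hB₁ : Measurable B₁) (hB₂ : Measurable B₂)
    (hZ₁b : ∀ ω, Z₁ ω ∈ Set.Icc (-1:ℝ) 1) (hZ₂b : ∀ ω, Z₂ ω ∈ Set.Icc (-1:ℝ) 1)
    (m₁ m₂ : ℝ) (hm₁ : m₁ = ∫ ω, Z₁ ω) (hm₂ : m₂ = ∫ ω, Z₂ ω)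
    (hB₁law : Measure.map B₁ ℙ = bernoulliReal ((1 - m₁) / 2))
    (hB₂law : Measure.map B₂ ℙ = bernoulliReal ((1 - m₂) / 2))
    (hind₁ : IndepFun B₁ Z₁ ℙ) (hind₂ : IndepFun B₂ Z₂ ℙ) :
    W2sq (Measure.map (fun ω => μ * (2 * B₁ ω - 1) + (1 - μ) * Z₁ ω) ℙ)
         (Measure.map (fun ω => μ * (2 * B₂ ω - 1) + (1 - μ) * Z₂ ω) ℙ)
      ≤ 2 * μ^2 * |m₁ - m₂| + (1 - μ)^2 * W2sq (Measure.map Z₁ ℙ) (Measure.map Z₂ ℙ) := by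
  classical
  obtain ⟨hμ0, hμ1⟩ := hμ
  -- basic integrability and mean bounds
  have hZ₁i : Integrable Z₁ ℙ :=
    (integrable_const (1:ℝ)).mono' hZ₁.aestronglyMeasurable
      (Filter.Eventually.of_forall fun ω => by
        rw [Real.norm_eq_abs]; exact abs_le.2 ⟨(hZ₁b ω).1, (hZ₁b ω).2⟩)
  have hZ₂i : Integrable Z₂ ℙ :=
    (integrable_const (1:ℝ)).mono' hZ₂.aestronglyMeasurable
      (Filter.Eventually.of_forall fun ω => by
        rw [Real.norm_eq_abs]; exact abs_le.2 ⟨(hZ₂b ω).1, (hZ₂b ω).2⟩)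
  have hm₁b : |m₁| ≤ 1 := by
    rw [hm₁, ← Real.norm_eq_abs]
    calc ‖∫ ω, Z₁ ω‖ ≤ ∫ ω, ‖Z₁ ω‖ := norm_integral_le_integral_norm _
    _ ≤ ∫ _ω : Ω, (1:ℝ) := integral_mono hZ₁i.norm (integrable_const 1)
        (fun ω => by rw [Real.norm_eq_abs]; exact abs_le.2 ⟨(hZ₁b ω).1, (hZ₁b ω).2⟩)
    _ = 1 := by simp
  have hm₂b : |m₂| ≤ 1 := by
    rw [hm₂, ← Real.norm_eq_abs]
    calc ‖∫ ω, Z₂ ω‖ ≤ ∫ ω, ‖Z₂ ω‖ := norm_integral_le_integral_norm _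
    _ ≤ ∫ _ω : Ω, (1:ℝ) := integral_mono hZ₂i.norm (integrable_const 1)
        (fun ω => by rw [Real.norm_eq_abs]; exact abs_le.2 ⟨(hZ₂b ω).1, (hZ₂b ω).2⟩)
    _ = 1 := by simp
  have hm₁b' := abs_le.1 hm₁b
  have hm₂b' := abs_le.1 hm₂b
  set p₁ : ℝ := (1 - m₁) / 2 with hp₁def
  set p₂ : ℝ := (1 - m₂) / 2 with hp₂def
  have hp₁ : p₁ ∈ Set.Icc (0:ℝ) 1 := ⟨by simp [hp₁def]; linarith, by simp [hp₁def]; linarith⟩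
  have hp₂ : p₂ ∈ Set.Icc (0:ℝ) 1 := ⟨by simp [hp₂def]; linarith, by simp [hp₂def]; linarith⟩
  -- the coupling sets
  set S : Set ℝ := {c : ℝ | ∃ π : Measure (ℝ × ℝ), IsProbabilityMeasure π ∧
    π.map Prod.fst = Measure.map Z₁ ℙ ∧ π.map Prod.snd = Measure.map Z₂ ℙ ∧
    c = ∫ p, (p.1 - p.2)^2 ∂π} with hSdef
  have hS_ne : S.Nonempty := by
    refine ⟨∫ p, (p.1 - p.2)^2 ∂(Measure.map (fun ω => (Z₁ ω, Z₂ ω)) ℙ),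
      Measure.map (fun ω => (Z₁ ω, Z₂ ω)) ℙ, ?_, ?_, ?_, rfl⟩
    · exact Measure.isProbabilityMeasure_map (hZ₁.prodMk hZ₂).aemeasurable
    · rw [Measure.map_map measurable_fst (hZ₁.prodMk hZ₂)]; rfl
    · rw [Measure.map_map measurable_snd (hZ₁.prodMk hZ₂)]; rfl
  have hS_bdd : BddBelow S := by
    refine ⟨0, fun c hc => ?_⟩
    obtain ⟨π, hπ, _, _, hcc⟩ := hc
    exact hcc ▸ integral_nonneg fun p => sq_nonneg _
  have key : ∀ c ∈ S,
      W2sq (Measure.map (fun ω => μ * (2 * B₁ ω - 1) + (1 - μ) * Z₁ ω) ℙ)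
        (Measure.map (fun ω => μ * (2 * B₂ ω - 1) + (1 - μ) * Z₂ ω) ℙ)
      ≤ 2 * μ^2 * |m₁ - m₂| + (1 - μ)^2 * c := by
    rintro c ⟨π, hπprob, hπ1, hπ2, hc⟩
    haveI := hπprob
    haveI : IsProbabilityMeasure (bcoup p₁ p₂) := isProb_bcoup hp₁ hp₂
    set κ : Measure (ℝ × ℝ) := bcoup p₁ p₂ with hκdef
    set Λ : Measure ((ℝ × ℝ) × (ℝ × ℝ)) := κ.prod π with hΛdef
    set F : (ℝ × ℝ) × (ℝ × ℝ) → ℝ × ℝ := fun q =>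
      (μ * (2 * q.1.1 - 1) + (1 - μ) * q.2.1, μ * (2 * q.1.2 - 1) + (1 - μ) * q.2.2) with hFdef
    have hF : Measurable F := by fun_prop
    set G : ℝ × ℝ → ℝ := fun q => μ * (2 * q.1 - 1) + (1 - μ) * q.2 with hGdef
    have hG : Measurable G := by fun_prop
    haveI : IsProbabilityMeasure Λ := by rw [hΛdef]; infer_instance
    set PP : Measure (ℝ × ℝ) := Λ.map F with hPPdef
    haveI : IsProbabilityMeasure PP := Measure.isProbabilityMeasure_map hF.aemeasurable
    -- marginals of PP
    have hmarg1 : PP.map Prod.fst = Measure.map (fun ω => μ * (2 * B₁ ω - 1) + (1 - μ) * Z₁ ω) ℙ := by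
      calc PP.map Prod.fst = Λ.map (Prod.fst ∘ F) := Measure.map_map measurable_fst hF
      _ = Λ.map (G ∘ Prod.map Prod.fst Prod.fst) := rfl
      _ = (Λ.map (Prod.map Prod.fst Prod.fst)).map G :=
          (Measure.map_map hG (measurable_fst.prodMap measurable_fst)).symm
      _ = ((κ.map Prod.fst).prod (π.map Prod.fst)).map G := by
          rw [Measure.map_prod_map _ _ measurable_fst measurable_fst]
      _ = ((Measure.map B₁ ℙ).prod (Measure.map Z₁ ℙ)).map G := by
          rw [hκdef, bcoup_map_fst hp₁ hp₂, hπ1, hB₁law]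
      _ = (Measure.map (fun ω => (B₁ ω, Z₁ ω)) ℙ).map G := by
          rw [← (indepFun_iff_map_prod_eq_prod_map_map hB₁.aemeasurable hZ₁.aemeasurable).1 hind₁]
      _ = Measure.map (fun ω => μ * (2 * B₁ ω - 1) + (1 - μ) * Z₁ ω) ℙ := by
          rw [Measure.map_map hG (hB₁.prodMk hZ₁)]; rfl
    have hmarg2 : PP.map Prod.snd = Measure.map (fun ω => μ * (2 * B₂ ω - 1) + (1 - μ) * Z₂ ω) ℙ := by
      calc PP.map Prod.snd = Λ.map (Prod.snd ∘ F) := Measure.map_map measurable_snd hF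
      _ = Λ.map (G ∘ Prod.map Prod.snd Prod.snd) := rfl
      _ = (Λ.map (Prod.map Prod.snd Prod.snd)).map G :=
          (Measure.map_map hG (measurable_snd.prodMap measurable_snd)).symm
      _ = ((κ.map Prod.snd).prod (π.map Prod.snd)).map G := by
          rw [Measure.map_prod_map _ _ measurable_snd measurable_snd]
      _ = ((Measure.map B₂ ℙ).prod (Measure.map Z₂ ℙ)).map G := by
          rw [hκdef, bcoup_map_snd hp₁ hp₂, hπ2, hB₂law]
      _ = (Measure.map (fun ω => (B₂ ω, Z₂ ω)) ℙ).map G := by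
          rw [← (indepFun_iff_map_prod_eq_prod_map_map hB₂.aemeasurable hZ₂.aemeasurable).1 hind₂]
      _ = Measure.map (fun ω => μ * (2 * B₂ ω - 1) + (1 - μ) * Z₂ ω) ℙ := by
          rw [Measure.map_map hG (hB₂.prodMk hZ₂)]; rfl
    -- a.e. bounds on π coordinates
    have haefst : ∀ᵐ q ∂π, q.1 ∈ Set.Icc (-1:ℝ) 1 := by
      have h0 : (π.map Prod.fst) (Set.Icc (-1:ℝ) 1)ᶜ = 0 := by
        rw [hπ1, Measure.map_apply hZ₁ measurableSet_Icc.compl,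
          show Z₁ ⁻¹' (Set.Icc (-1:ℝ) 1)ᶜ = ∅ from by ext ω; simp [hZ₁b ω]]
        exact measure_empty
      rw [Measure.map_apply measurable_fst measurableSet_Icc.compl] at h0
      exact (ae_iff).2 h0
    have haesnd : ∀ᵐ q ∂π, q.2 ∈ Set.Icc (-1:ℝ) 1 := by
      have h0 : (π.map Prod.snd) (Set.Icc (-1:ℝ) 1)ᶜ = 0 := by
        rw [hπ2, Measure.map_apply hZ₂ measurableSet_Icc.compl,
          show Z₂ ⁻¹' (Set.Icc (-1:ℝ) 1)ᶜ = ∅ from by ext ω; simp [hZ₂b ω]]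
        exact measure_empty
      rw [Measure.map_apply measurable_snd measurableSet_Icc.compl] at h0
      exact (ae_iff).2 h0
    -- integrability over π
    have hΔz : Integrable (fun q : ℝ × ℝ => q.1 - q.2) π := by
      refine (integrable_const (2:ℝ)).mono'
        (by fun_prop : Measurable fun q : ℝ × ℝ => q.1 - q.2).aestronglyMeasurable ?_
      filter_upwards [haefst, haesnd] with q h1 h2
      rw [Real.norm_eq_abs]
      have := abs_sub_abs_le_abs_sub q.1 q.2
      have a1 : |q.1| ≤ 1 := abs_le.2 ⟨h1.1, h1.2⟩
      have a2 : |q.2| ≤ 1 := abs_le.2 ⟨h2.1, h2.2⟩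
      calc |q.1 - q.2| ≤ |q.1| + |q.2| := abs_sub _ _
      _ ≤ 2 := by linarith
    have hΔz2 : Integrable (fun q : ℝ × ℝ => (q.1 - q.2)^2) π := by
      refine (integrable_const (4:ℝ)).mono'
        (by fun_prop : Measurable fun q : ℝ × ℝ => (q.1 - q.2)^2).aestronglyMeasurable ?_
      filter_upwards [haefst, haesnd] with q h1 h2
      have a1 : |q.1| ≤ 1 := abs_le.2 ⟨h1.1, h1.2⟩
      have a2 : |q.2| ≤ 1 := abs_le.2 ⟨h2.1, h2.2⟩
      have h3 : |q.1 - q.2| ≤ 2 := by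
        calc |q.1 - q.2| ≤ |q.1| + |q.2| := abs_sub _ _
        _ ≤ 2 := by linarith
      rw [Real.norm_eq_abs, abs_of_nonneg (sq_nonneg _)]
      calc (q.1 - q.2)^2 = |q.1 - q.2|^2 := (sq_abs _).symm
      _ ≤ 2^2 := pow_le_pow_left₀ (abs_nonneg _) h3 2
      _ = 4 := by norm_num
    have hfst_i : Integrable (fun q : ℝ × ℝ => q.1) π := by
      refine (integrable_const (1:ℝ)).mono' measurable_fst.aestronglyMeasurable ?_
      filter_upwards [haefst] with q h1
      rw [Real.norm_eq_abs]; exact abs_le.2 ⟨h1.1, h1.2⟩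
    have hsnd_i : Integrable (fun q : ℝ × ℝ => q.2) π := by
      refine (integrable_const (1:ℝ)).mono' measurable_snd.aestronglyMeasurable ?_
      filter_upwards [haesnd] with q h2
      rw [Real.norm_eq_abs]; exact abs_le.2 ⟨h2.1, h2.2⟩
    -- mean of Δz
    have hmeanz : ∫ q, (q.1 - q.2 : ℝ) ∂π = m₁ - m₂ := by
      rw [integral_sub hfst_i hsnd_i]
      have e1 : ∫ q, (q.1 : ℝ) ∂π = m₁ := by
        calc ∫ q, (q.1 : ℝ) ∂π = ∫ x, x ∂(Measure.map Prod.fst π) :=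
              (integral_map measurable_fst.aemeasurable aestronglyMeasurable_id).symm
        _ = ∫ x, x ∂(Measure.map Z₁ ℙ) := by rw [hπ1]
        _ = ∫ ω, Z₁ ω := integral_map hZ₁.aemeasurable aestronglyMeasurable_id
        _ = m₁ := hm₁.symm
      have e2 : ∫ q, (q.2 : ℝ) ∂π = m₂ := by
        calc ∫ q, (q.2 : ℝ) ∂π = ∫ x, x ∂(Measure.map Prod.snd π) :=
              (integral_map measurable_snd.aemeasurable aestronglyMeasurable_id).symm
        _ = ∫ x, x ∂(Measure.map Z₂ ℙ) := by rw [hπ2]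
        _ = ∫ ω, Z₂ ω := integral_map hZ₂.aemeasurable aestronglyMeasurable_id
        _ = m₂ := hm₂.symm
      rw [e1, e2]
    -- integrability over κ
    have hΔb : Integrable (fun b : ℝ × ℝ => b.1 - b.2) κ := integrable_bcoup (by fun_prop)
    have hΔb2 : Integrable (fun b : ℝ × ℝ => (b.1 - b.2)^2) κ := integrable_bcoup (by fun_prop)
    -- bcoup moments
    have hbm : ∫ b, (b.1 - b.2 : ℝ) ∂κ = p₁ - p₂ := by
      rw [hκdef, integral_bcoup hp₁ hp₂ (by fun_prop)]; norm_num
    have hbm2 : ∫ b, ((b.1 - b.2 : ℝ))^2 ∂κ = |m₁ - m₂| / 2 := by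
      rw [hκdef, integral_bcoup hp₁ hp₂ (by fun_prop)]
      have h1 : p₁ + p₂ - 2 * min p₁ p₂ = |p₁ - p₂| := by
        rcases le_total p₁ p₂ with h | h
        · rw [min_eq_left h, abs_of_nonpos (by linarith)]; ring
        · rw [min_eq_right h, abs_of_nonneg (by linarith)]; ring
      have h2 : |p₁ - p₂| = |m₁ - m₂| / 2 := by
        rw [hp₁def, hp₂def, show (1 - m₁) / 2 - (1 - m₂) / 2 = (m₂ - m₁) / 2 by ring,
          abs_div, abs_sub_comm m₂ m₁]
        norm_num
      norm_num
      linarith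
    -- integrability of the three pieces over Λ
    have Ia : Integrable (fun q : (ℝ × ℝ) × (ℝ × ℝ) => 4 * μ^2 * (q.1.1 - q.1.2)^2) Λ := by
      have := (hΔb2.const_mul (4 * μ^2)).mul_prod (integrable_const (1:ℝ)) (ν := π)
      simpa using this
    have Ib : Integrable (fun q : (ℝ × ℝ) × (ℝ × ℝ) =>
        (4 * μ * (1 - μ) * (q.1.1 - q.1.2)) * (q.2.1 - q.2.2)) Λ :=
      (hΔb.const_mul (4 * μ * (1 - μ))).mul_prod hΔz
    have Ic : Integrable (fun q : (ℝ × ℝ) × (ℝ × ℝ) => (1 - μ)^2 * (q.2.1 - q.2.2)^2) Λ := by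
      have := (integrable_const (1:ℝ)).mul_prod (hΔz2.const_mul ((1 - μ)^2)) (μ := κ)
      simpa using this
    -- the cost of PP
    have hcost : ∫ p, ((p.1 : ℝ) - p.2)^2 ∂PP
        = 4 * μ^2 * (|m₁ - m₂| / 2) + (4 * μ * (1 - μ)) * ((p₁ - p₂) * (m₁ - m₂))
          + (1 - μ)^2 * c := by
      have hmap : ∫ p, ((p.1 : ℝ) - p.2)^2 ∂PP = ∫ q, ((F q).1 - (F q).2)^2 ∂Λ := by
        rw [hPPdef]
        exact integral_map hF.aemeasurable
          (by fun_prop : Measurable fun p : ℝ × ℝ => (p.1 - p.2)^2).aestronglyMeasurable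
      rw [hmap]
      have hre : (fun q : (ℝ × ℝ) × (ℝ × ℝ) => ((F q).1 - (F q).2)^2)
          = fun q => 4 * μ^2 * (q.1.1 - q.1.2)^2
            + ((4 * μ * (1 - μ) * (q.1.1 - q.1.2)) * (q.2.1 - q.2.2)
              + (1 - μ)^2 * (q.2.1 - q.2.2)^2) := by
        funext q; simp only [hFdef]; ring
      have Ibc : Integrable (fun q : (ℝ × ℝ) × (ℝ × ℝ) =>
          (4 * μ * (1 - μ) * (q.1.1 - q.1.2)) * (q.2.1 - q.2.2)
            + (1 - μ)^2 * (q.2.1 - q.2.2)^2) Λ := by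
        have := Ib.add Ic
        exact this
      rw [hre, integral_add Ia Ibc, integral_add Ib Ic]
      have e1 : ∫ q, (4 * μ^2 * ((q.1.1 : ℝ) - q.1.2)^2) ∂Λ = 4 * μ^2 * (|m₁ - m₂| / 2) := by
        calc ∫ q, (4 * μ^2 * ((q.1.1 : ℝ) - q.1.2)^2) ∂Λ
            = (π Set.univ).toReal • ∫ b, 4 * μ^2 * ((b.1 : ℝ) - b.2)^2 ∂κ := by
              rw [hΛdef]; exact integral_fun_fst (fun b : ℝ × ℝ => 4 * μ^2 * ((b.1 : ℝ) - b.2)^2)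
        _ = ∫ b, 4 * μ^2 * ((b.1 : ℝ) - b.2)^2 ∂κ := by simp
        _ = 4 * μ^2 * ∫ b, ((b.1 : ℝ) - b.2)^2 ∂κ := integral_const_mul _ _
        _ = 4 * μ^2 * (|m₁ - m₂| / 2) := by rw [hbm2]
      have e2 : ∫ q, ((4 * μ * (1 - μ) * ((q.1.1 : ℝ) - q.1.2)) * (q.2.1 - q.2.2)) ∂Λ
          = (4 * μ * (1 - μ)) * ((p₁ - p₂) * (m₁ - m₂)) := by
        calc ∫ q, ((4 * μ * (1 - μ) * ((q.1.1 : ℝ) - q.1.2)) * (q.2.1 - q.2.2)) ∂Λ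
            = (∫ b, 4 * μ * (1 - μ) * ((b.1 : ℝ) - b.2) ∂κ) * ∫ z, ((z.1 : ℝ) - z.2) ∂π := by
              rw [hΛdef]; exact integral_prod_mul (fun b : ℝ × ℝ => 4 * μ * (1 - μ) * ((b.1 : ℝ) - b.2)) (fun z : ℝ × ℝ => (z.1 : ℝ) - z.2)
        _ = (4 * μ * (1 - μ) * ∫ b, ((b.1 : ℝ) - b.2) ∂κ) * ∫ z, ((z.1 : ℝ) - z.2) ∂π := by
              rw [integral_const_mul]
        _ = (4 * μ * (1 - μ) * (p₁ - p₂)) * (m₁ - m₂) := by rw [hbm, hmeanz]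
        _ = (4 * μ * (1 - μ)) * ((p₁ - p₂) * (m₁ - m₂)) := by ring
      have e3 : ∫ q, ((1 - μ)^2 * ((q.2.1 : ℝ) - q.2.2)^2) ∂Λ = (1 - μ)^2 * c := by
        calc ∫ q, ((1 - μ)^2 * ((q.2.1 : ℝ) - q.2.2)^2) ∂Λ
            = (κ Set.univ).toReal • ∫ z, (1 - μ)^2 * ((z.1 : ℝ) - z.2)^2 ∂π := by
              rw [hΛdef]; exact integral_fun_snd (fun z : ℝ × ℝ => (1 - μ)^2 * ((z.1 : ℝ) - z.2)^2)
        _ = ∫ z, (1 - μ)^2 * ((z.1 : ℝ) - z.2)^2 ∂π := by simp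
        _ = (1 - μ)^2 * ∫ z, ((z.1 : ℝ) - z.2)^2 ∂π := integral_const_mul _ _
        _ = (1 - μ)^2 * c := by rw [hc]
      rw [e1, e2, e3]; ring
    -- conclude
    have hmem : ∫ p, ((p.1 : ℝ) - p.2)^2 ∂PP ∈ {c : ℝ | ∃ π' : Measure (ℝ × ℝ),
        IsProbabilityMeasure π' ∧
        π'.map Prod.fst = Measure.map (fun ω => μ * (2 * B₁ ω - 1) + (1 - μ) * Z₁ ω) ℙ ∧
        π'.map Prod.snd = Measure.map (fun ω => μ * (2 * B₂ ω - 1) + (1 - μ) * Z₂ ω) ℙ ∧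
        c = ∫ p, (p.1 - p.2)^2 ∂π'} := ⟨PP, inferInstance, hmarg1, hmarg2, rfl⟩
    have hbdd : BddBelow {c : ℝ | ∃ π' : Measure (ℝ × ℝ), IsProbabilityMeasure π' ∧
        π'.map Prod.fst = Measure.map (fun ω => μ * (2 * B₁ ω - 1) + (1 - μ) * Z₁ ω) ℙ ∧
        π'.map Prod.snd = Measure.map (fun ω => μ * (2 * B₂ ω - 1) + (1 - μ) * Z₂ ω) ℙ ∧
        c = ∫ p, (p.1 - p.2)^2 ∂π'} := by
      refine ⟨0, fun x hx => ?_⟩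
      obtain ⟨π', _, _, _, hxx⟩ := hx
      exact hxx ▸ integral_nonneg fun p => sq_nonneg _
    have hle : W2sq (Measure.map (fun ω => μ * (2 * B₁ ω - 1) + (1 - μ) * Z₁ ω) ℙ)
        (Measure.map (fun ω => μ * (2 * B₂ ω - 1) + (1 - μ) * Z₂ ω) ℙ)
        ≤ ∫ p, ((p.1 : ℝ) - p.2)^2 ∂PP := csInf_le hbdd hmem
    have hpd : (p₁ - p₂) * (m₁ - m₂) = -(m₁ - m₂)^2 / 2 := by
      rw [hp₁def, hp₂def]; ring
    have hfin : 4 * μ^2 * (|m₁ - m₂| / 2) + (4 * μ * (1 - μ)) * ((p₁ - p₂) * (m₁ - m₂))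
          + (1 - μ)^2 * c ≤ 2 * μ^2 * |m₁ - m₂| + (1 - μ)^2 * c := by
      rw [hpd]
      nlinarith [sq_nonneg (m₁ - m₂), mul_pos hμ0 (by linarith : (0:ℝ) < 1 - μ)]
    calc W2sq _ _ ≤ ∫ p, ((p.1 : ℝ) - p.2)^2 ∂PP := hle
    _ = _ := hcost
    _ ≤ 2 * μ^2 * |m₁ - m₂| + (1 - μ)^2 * c := hfin
  -- from key to the infimum bound
  set t : ℝ := (1 - μ)^2 with htdef
  have ht : 0 < t := by rw [htdef]; exact pow_pos (by linarith) 2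
  set W : ℝ := W2sq (Measure.map (fun ω => μ * (2 * B₁ ω - 1) + (1 - μ) * Z₁ ω) ℙ)
    (Measure.map (fun ω => μ * (2 * B₂ ω - 1) + (1 - μ) * Z₂ ω) ℙ) with hWdef
  have hW2 : W2sq (Measure.map Z₁ ℙ) (Measure.map Z₂ ℙ) = sInf S := rfl
  have hlb : (W - 2 * μ^2 * |m₁ - m₂|) / t ≤ sInf S := by
    refine le_csInf hS_ne fun c hc => ?_
    rw [div_le_iff₀ ht]
    have := key c hc
    nlinarith
  rw [hW2]
  have := (div_le_iff₀ ht).1 hlb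
  nlinarith
end

section
/- Let μ ∈ (0,1). For probability measures f, g on ℝ, define the Toscani distance d₁(f,g) = sup_{ξ ≠ 0} |f̂(ξ) - ĝ(ξ)|/|ξ|, where f̂ denotes the Fourier transform (characteristic function with e^{-ixξ}). Let ρ⁽¹⁾, ρ⁽²⁾ be probability measures on [-1,1] with means m⁽¹⁾, m⁽²⁾, and let Q₊[ρ⁽ⁱ⁾] be the law of μ(2Bⁱ-1) + (1-μ)Zⁱ with Zⁱ ~ ρ⁽ⁱ⁾ independent of Bⁱ ~ Bernoulli((1-m⁽ⁱ⁾)/2). Then d₁(Q₊[ρ⁽¹⁾], Q₊[ρ⁽²⁾]) ≤ μ|m⁽¹⁾ - m⁽²⁾| + (1-μ) d₁(ρ⁽¹⁾, ρ⁽²⁾). -/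
open MeasureTheory ProbabilityTheory

/-- Fourier transform (characteristic function with `e^{-ixξ}`) of a measure on `ℝ`. -/
noncomputable def fourierT (ρ : Measure ℝ) (ξ : ℝ) : ℂ :=
  ∫ x, Complex.exp (-(Complex.I * (ξ : ℂ) * (x : ℂ))) ∂ρ

/-- The Toscani (Fourier-based) distance of order 1. -/
noncomputable def d1 (f g : Measure ℝ) : ℝ :=
  ⨆ ξ : {ξ : ℝ // ξ ≠ 0}, ‖fourierT f ξ - fourierT g ξ‖ / |ξ.1|

lemma abs_exp_I (r : ℝ) : ‖Complex.exp ((r:ℂ) * Complex.I)‖ = 1 := by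
  simp [Complex.norm_exp]

lemma exp_I_sub_exp_neg (θ : ℝ) :
    ‖Complex.exp ((θ:ℂ) * Complex.I) - Complex.exp (-(θ:ℂ) * Complex.I)‖
      = 2 * |Real.sin θ| := by
  have h : Complex.exp ((θ:ℂ) * Complex.I) - Complex.exp (-(θ:ℂ) * Complex.I)
      = 2 * Complex.sin θ * Complex.I := by
    rw [Complex.sin]
    linear_combination (Complex.exp ((θ:ℂ) * Complex.I)
      - Complex.exp (-(θ:ℂ) * Complex.I)) * Complex.I_sq
  rw [h]
  simp [← Complex.ofReal_sin, abs_mul]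

lemma abs_exp_I_sub_one_le (r : ℝ) :
    ‖Complex.exp ((r:ℂ) * Complex.I) - 1‖ ≤ |r| := by
  have h : Complex.exp ((r:ℂ) * Complex.I) - 1
      = Complex.exp (((r/2:ℝ):ℂ) * Complex.I) *
        (Complex.exp (((r/2:ℝ):ℂ) * Complex.I) - Complex.exp (-((r/2:ℝ):ℂ) * Complex.I)) := by
    rw [mul_sub, ← Complex.exp_add, ← Complex.exp_add]
    push_cast
    ring_nf
    simp
    ring
  rw [h, norm_mul, abs_exp_I, one_mul, exp_I_sub_exp_neg]
  calc 2 * |Real.sin (r/2)| ≤ 2 * |r/2| := by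
        have := Real.abs_sin_le_abs (x := r/2)
        linarith
    _ = |r| := by rw [abs_div, abs_two]; ring

lemma integrable_of_bound {Ω : Type*} [MeasureSpace Ω] [IsProbabilityMeasure (ℙ : Measure Ω)]
    {E : Type*} [NormedAddCommGroup E] {f : Ω → E} (hf : AEStronglyMeasurable f ℙ)
    (C : ℝ) (h : ∀ ω, ‖f ω‖ ≤ C) : Integrable f ℙ :=
  (integrable_const C).mono' hf (ae_of_all _ h)

lemma indep_integral_mul_complex {Ω : Type*} [MeasureSpace Ω]
    [IsProbabilityMeasure (ℙ : Measure Ω)] {X Y : Ω → ℝ} (h : IndepFun X Y ℙ)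
    {f g : ℝ → ℂ} (hf : Measurable f) (hg : Measurable g)
    (hfb : ∀ x, ‖f x‖ ≤ 1) (hgb : ∀ x, ‖g x‖ ≤ 1)
    (hX : Measurable X) (hY : Measurable Y) :
    ∫ ω, f (X ω) * g (Y ω) = (∫ ω, f (X ω)) * ∫ ω, g (Y ω) := by
  have hfX : Measurable fun ω => f (X ω) := hf.comp hX
  have hgY : Measurable fun ω => g (Y ω) := hg.comp hY
  have hfXi : Integrable (fun ω => f (X ω)) ℙ :=
    integrable_of_bound hfX.aestronglyMeasurable 1 fun ω => hfb _
  have hgYi : Integrable (fun ω => g (Y ω)) ℙ :=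
    integrable_of_bound hgY.aestronglyMeasurable 1 fun ω => hgb _
  have hmul : Integrable (fun ω => f (X ω) * g (Y ω)) ℙ := by
    refine integrable_of_bound (hfX.mul hgY).aestronglyMeasurable 1 fun ω => ?_
    calc ‖f (X ω) * g (Y ω)‖ = ‖f (X ω)‖ * ‖g (Y ω)‖ := norm_mul _ _
      _ ≤ 1 * 1 := mul_le_mul (hfb _) (hgb _) (norm_nonneg _) zero_le_one
      _ = 1 := one_mul 1
  -- real/imaginary parts
  have key : ∀ (u v : ℝ → ℝ), Measurable u → Measurable v → (∀ x, |u x| ≤ 1) → (∀ x, |v x| ≤ 1) →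
      ∫ ω, u (X ω) * v (Y ω) = (∫ ω, u (X ω)) * ∫ ω, v (Y ω) := by
    intro u v hu hv hub hvb
    have : IndepFun (fun ω => u (X ω)) (fun ω => v (Y ω)) ℙ := h.comp hu hv
    exact this.integral_mul_eq_mul_integral
      ((hu.comp hX)).aestronglyMeasurable
      ((hv.comp hY)).aestronglyMeasurable
  have hre : ∀ x, |(f x).re| ≤ 1 := fun x => (Complex.abs_re_le_norm _).trans (hfb x)
  have him : ∀ x, |(f x).im| ≤ 1 := fun x => (Complex.abs_im_le_norm _).trans (hfb x)
  have hre' : ∀ x, |(g x).re| ≤ 1 := fun x => (Complex.abs_re_le_norm _).trans (hgb x)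
  have him' : ∀ x, |(g x).im| ≤ 1 := fun x => (Complex.abs_im_le_norm _).trans (hgb x)
  have k1 := key (fun x => (f x).re) (fun x => (g x).re)
    (Complex.measurable_re.comp hf) (Complex.measurable_re.comp hg) hre hre'
  have k2 := key (fun x => (f x).im) (fun x => (g x).im)
    (Complex.measurable_im.comp hf) (Complex.measurable_im.comp hg) him him'
  have k3 := key (fun x => (f x).re) (fun x => (g x).im)
    (Complex.measurable_re.comp hf) (Complex.measurable_im.comp hg) hre him'
  have k4 := key (fun x => (f x).im) (fun x => (g x).re)
    (Complex.measurable_im.comp hf) (Complex.measurable_re.comp hg) him hre'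
  apply Complex.ext
  · have h1 : (∫ ω, f (X ω) * g (Y ω)).re = ∫ ω, (f (X ω) * g (Y ω)).re := (integral_re hmul).symm
    have h2 : (∫ ω, f (X ω)).re = ∫ ω, (f (X ω)).re := (integral_re hfXi).symm
    have h3 : (∫ ω, g (Y ω)).re = ∫ ω, (g (Y ω)).re := (integral_re hgYi).symm
    rw [Complex.mul_re, h1, h2, h3]
    simp only [Complex.mul_re]
    rw [integral_sub, k1, k2]
    · have h4 : (∫ ω, f (X ω)).im = ∫ ω, (f (X ω)).im := (integral_im hfXi).symm
      have h5 : (∫ ω, g (Y ω)).im = ∫ ω, (g (Y ω)).im := (integral_im hgYi).symm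
      rw [h4, h5]
    · exact integrable_of_bound ((Complex.measurable_re.comp hfX).mul
        (Complex.measurable_re.comp hgY)).aestronglyMeasurable 1 fun ω => by
        rw [Real.norm_eq_abs, abs_mul]
        exact mul_le_one₀ (hre _) (abs_nonneg _) (hre' _)
    · exact integrable_of_bound ((Complex.measurable_im.comp hfX).mul
        (Complex.measurable_im.comp hgY)).aestronglyMeasurable 1 fun ω => by
        rw [Real.norm_eq_abs, abs_mul]
        exact mul_le_one₀ (him _) (abs_nonneg _) (him' _)
  · have h1 : (∫ ω, f (X ω) * g (Y ω)).im = ∫ ω, (f (X ω) * g (Y ω)).im := (integral_im hmul).symm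
    have h2 : (∫ ω, f (X ω)).re = ∫ ω, (f (X ω)).re := (integral_re hfXi).symm
    have h3 : (∫ ω, g (Y ω)).re = ∫ ω, (g (Y ω)).re := (integral_re hgYi).symm
    have h4 : (∫ ω, f (X ω)).im = ∫ ω, (f (X ω)).im := (integral_im hfXi).symm
    have h5 : (∫ ω, g (Y ω)).im = ∫ ω, (g (Y ω)).im := (integral_im hgYi).symm
    rw [Complex.mul_im, h1, h2, h3, h4, h5]
    simp only [Complex.mul_im]
    rw [integral_add, k3, k4]
    · exact integrable_of_bound ((Complex.measurable_re.comp hfX).mul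
        (Complex.measurable_im.comp hgY)).aestronglyMeasurable 1 fun ω => by
        rw [Real.norm_eq_abs, abs_mul]
        exact mul_le_one₀ (hre _) (abs_nonneg _) (him' _)
    · exact integrable_of_bound ((Complex.measurable_im.comp hfX).mul
        (Complex.measurable_re.comp hgY)).aestronglyMeasurable 1 fun ω => by
        rw [Real.norm_eq_abs, abs_mul]
        exact mul_le_one₀ (him _) (abs_nonneg _) (hre' _)

lemma abs_exp_eq_one {z : ℂ} (hz : z.re = 0) : ‖Complex.exp z‖ = 1 := by
  rw [Complex.norm_exp, hz, Real.exp_zero]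

lemma integral_bernoulliReal {p : ℝ} (hp0 : 0 ≤ p) (hp1 : p ≤ 1) (h : ℝ → ℂ)
    (hm : Measurable h) (hb : ∀ x, ‖h x‖ ≤ 1) :
    ∫ x, h x ∂(bernoulliReal p) = (p : ℂ) * h 1 + ((1 - p : ℝ) : ℂ) * h 0 := by
  have hb' : ∀ x, ‖h x‖ ≤ 1 := hb
  have int1 : Integrable h (Measure.dirac (1:ℝ)) :=
    (integrable_const (1:ℝ)).mono' hm.aestronglyMeasurable (ae_of_all _ hb')
  have int0 : Integrable h (Measure.dirac (0:ℝ)) :=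
    (integrable_const (1:ℝ)).mono' hm.aestronglyMeasurable (ae_of_all _ hb')
  rw [bernoulliReal, integral_add_measure (int1.smul_measure (by simp))
      (int0.smul_measure (by simp)), integral_smul_measure, integral_smul_measure,
    integral_dirac, integral_dirac, ENNReal.toReal_ofReal hp0,
    ENNReal.toReal_ofReal (by linarith)]
  simp [Complex.real_smul]

lemma fourierT_map {Ω : Type*} [MeasureSpace Ω] [IsProbabilityMeasure (ℙ : Measure Ω)]
    {X : Ω → ℝ} (hX : Measurable X) (ξ : ℝ) :
    fourierT (Measure.map X ℙ) ξ = ∫ ω, Complex.exp (-(Complex.I * (ξ:ℂ) * (X ω : ℂ))) := by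
  rw [fourierT, integral_map hX.aemeasurable]
  exact Measurable.aestronglyMeasurable (by fun_prop)

lemma char_sub_one {Ω : Type*} [MeasureSpace Ω] [IsProbabilityMeasure (ℙ : Measure Ω)]
    {X : Ω → ℝ} (hX : Measurable X) (hXb : ∀ ω, X ω ∈ Set.Icc (-1:ℝ) 1) (η : ℝ) :
    ‖fourierT (Measure.map X ℙ) η - 1‖ ≤ |η| := by
  rw [fourierT_map hX]
  have h1 : (1:ℂ) = ∫ _ω : Ω, (1:ℂ) := by simp
  rw [h1, ← integral_sub (integrable_of_bound (Measurable.aestronglyMeasurable (by fun_prop)) 1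
      (fun ω => le_of_eq (abs_exp_eq_one (by simp)))) (integrable_const 1)]
  calc ‖∫ ω, (Complex.exp (-(Complex.I * (η:ℂ) * (X ω : ℂ))) - 1)‖
      ≤ ∫ ω, ‖Complex.exp (-(Complex.I * (η:ℂ) * (X ω : ℂ))) - 1‖ :=
        by exact norm_integral_le_integral_norm _
    _ ≤ ∫ _ω : Ω, |η| := by
        refine integral_mono (Integrable.norm (integrable_of_bound
          (Measurable.aestronglyMeasurable (by fun_prop)) 2 fun ω => ?_)) (integrable_const _)
          fun ω => ?_
        · calc ‖Complex.exp (-(Complex.I * (η:ℂ) * (X ω : ℂ))) - 1‖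
              ≤ ‖Complex.exp (-(Complex.I * (η:ℂ) * (X ω : ℂ)))‖ + ‖(1:ℂ)‖ := norm_sub_le _ _
            _ ≤ 2 := by
                rw [abs_exp_eq_one (by simp)]
                norm_num
        · have hcast : -(Complex.I * (η:ℂ) * (X ω : ℂ)) = ((-(η * X ω) : ℝ) : ℂ) * Complex.I := by
            push_cast; ring
          rw [hcast]
          refine (abs_exp_I_sub_one_le _).trans ?_
          rw [abs_neg, abs_mul]
          have : |X ω| ≤ 1 := abs_le.mpr (hXb ω)
          nlinarith [abs_nonneg η, abs_nonneg (X ω)]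
    _ = |η| := by simp

instance : Nonempty {ξ : ℝ // ξ ≠ 0} := ⟨⟨1, one_ne_zero⟩⟩

lemma char_abs_le_one {Ω : Type*} [MeasureSpace Ω] [IsProbabilityMeasure (ℙ : Measure Ω)]
    {X : Ω → ℝ} (hX : Measurable X) (η : ℝ) :
    ‖fourierT (Measure.map X ℙ) η‖ ≤ 1 := by
  rw [fourierT_map hX]
  refine (norm_integral_le_integral_norm _).trans (le_of_eq ?_)
  rw [integral_congr_ae (ae_of_all _ fun ω => show
      ‖Complex.exp (-(Complex.I * (η:ℂ) * (X ω : ℂ)))‖ = (1:ℝ) by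
      exact abs_exp_eq_one (by simp))]
  simp

lemma side_factor {Ω : Type*} [MeasureSpace Ω] [IsProbabilityMeasure (ℙ : Measure Ω)]
    (μ ξ : ℝ) {Z B : Ω → ℝ} (hZ : Measurable Z) (hB : Measurable B)
    (hind : IndepFun B Z ℙ) :
    fourierT (Measure.map (fun ω => μ * (2 * B ω - 1) + (1 - μ) * Z ω) ℙ) ξ
      = (∫ x, Complex.exp (-(Complex.I * (ξ:ℂ) * ((μ:ℂ) * (2*(x:ℂ) - 1)))) ∂(Measure.map B ℙ))
        * fourierT (Measure.map Z ℙ) ((1-μ)*ξ) := by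
  set f : ℝ → ℂ := fun x => Complex.exp (-(Complex.I * (ξ:ℂ) * ((μ:ℂ) * (2*(x:ℂ) - 1))))
    with hf_def
  set g : ℝ → ℂ := fun x => Complex.exp (-(Complex.I * (((1-μ)*ξ : ℝ):ℂ) * (x:ℂ))) with hg_def
  have hfm : Measurable f := by fun_prop
  have hgm : Measurable g := by fun_prop
  have hfb : ∀ x, ‖f x‖ ≤ 1 := fun x => le_of_eq (abs_exp_eq_one (by simp))
  have hgb : ∀ x, ‖g x‖ ≤ 1 := fun x => le_of_eq (abs_exp_eq_one (by simp))
  have hS : Measurable (fun ω => μ * (2 * B ω - 1) + (1 - μ) * Z ω) := by fun_prop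
  rw [fourierT_map hS]
  have heq : ∀ ω, Complex.exp (-(Complex.I * (ξ:ℂ) * ((μ * (2 * B ω - 1) + (1 - μ) * Z ω : ℝ):ℂ)))
      = f (B ω) * g (Z ω) := by
    intro ω
    rw [hf_def, hg_def]
    simp only
    rw [← Complex.exp_add]
    congr 1
    push_cast
    ring
  simp_rw [heq]
  rw [indep_integral_mul_complex hind hfm hgm hfb hgb hB hZ,
    integral_map hB.aemeasurable hfm.aestronglyMeasurable, fourierT_map hZ]

theorem stmt13 {Ω : Type*} [MeasureSpace Ω] [IsProbabilityMeasure (ℙ : Measure Ω)]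
    (μ : ℝ) (hμ : μ ∈ Set.Ioo (0:ℝ) 1)
    (Z₁ Z₂ B₁ B₂ : Ω → ℝ) (hZ₁ : Measurable Z₁) (hZ₂ : Measurable Z₂)
    (hB₁ : Measurable B₁) (hB₂ : Measurable B₂)
    (hZ₁b : ∀ ω, Z₁ ω ∈ Set.Icc (-1:ℝ) 1) (hZ₂b : ∀ ω, Z₂ ω ∈ Set.Icc (-1:ℝ) 1)
    (m₁ m₂ : ℝ) (hm₁ : m₁ = ∫ ω, Z₁ ω) (hm₂ : m₂ = ∫ ω, Z₂ ω)
    (hB₁law : Measure.map B₁ ℙ = bernoulliReal ((1 - m₁) / 2))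
    (hB₂law : Measure.map B₂ ℙ = bernoulliReal ((1 - m₂) / 2))
    (hind₁ : IndepFun B₁ Z₁ ℙ) (hind₂ : IndepFun B₂ Z₂ ℙ) :
    d1 (Measure.map (fun ω => μ * (2 * B₁ ω - 1) + (1 - μ) * Z₁ ω) ℙ)
       (Measure.map (fun ω => μ * (2 * B₂ ω - 1) + (1 - μ) * Z₂ ω) ℙ)
      ≤ μ * |m₁ - m₂| + (1 - μ) * d1 (Measure.map Z₁ ℙ) (Measure.map Z₂ ℙ) := by
  obtain ⟨hμ0, hμ1⟩ := hμ
  -- mean bounds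
  have hZ₁i : Integrable Z₁ ℙ := integrable_of_bound hZ₁.aestronglyMeasurable 1
    (fun ω => by rw [Real.norm_eq_abs]; exact abs_le.mpr (hZ₁b ω))
  have hZ₂i : Integrable Z₂ ℙ := integrable_of_bound hZ₂.aestronglyMeasurable 1
    (fun ω => by rw [Real.norm_eq_abs]; exact abs_le.mpr (hZ₂b ω))
  have hm₁b : |m₁| ≤ 1 := by
    rw [hm₁]
    calc |∫ ω, Z₁ ω| ≤ ∫ ω, |Z₁ ω| := by
          simpa [Real.norm_eq_abs] using norm_integral_le_integral_norm (μ := ℙ) Z₁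
      _ ≤ ∫ _ω : Ω, (1:ℝ) :=
          integral_mono hZ₁i.abs (integrable_const 1) fun ω => abs_le.mpr (hZ₁b ω)
      _ = 1 := by simp
  have hm₂b : |m₂| ≤ 1 := by
    rw [hm₂]
    calc |∫ ω, Z₂ ω| ≤ ∫ ω, |Z₂ ω| := by
          simpa [Real.norm_eq_abs] using norm_integral_le_integral_norm (μ := ℙ) Z₂
      _ ≤ ∫ _ω : Ω, (1:ℝ) :=
          integral_mono hZ₂i.abs (integrable_const 1) fun ω => abs_le.mpr (hZ₂b ω)
      _ = 1 := by simp
  rw [abs_le] at hm₁b hm₂b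
  -- d1 pieces
  have hd1_bdd : BddAbove (Set.range fun η : {η : ℝ // η ≠ 0} =>
      ‖fourierT (Measure.map Z₁ ℙ) η - fourierT (Measure.map Z₂ ℙ) η‖ / |η.1|) := by
    refine ⟨2, ?_⟩
    rintro x ⟨⟨η, hη⟩, rfl⟩
    have hηpos : (0:ℝ) < |η| := abs_pos.mpr hη
    rw [div_le_iff₀ hηpos]
    calc ‖fourierT (Measure.map Z₁ ℙ) η - fourierT (Measure.map Z₂ ℙ) η‖
        ≤ ‖fourierT (Measure.map Z₁ ℙ) η - 1‖
          + ‖fourierT (Measure.map Z₂ ℙ) η - 1‖ := by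
          have := norm_sub_le_norm_sub_add_norm_sub (fourierT (Measure.map Z₁ ℙ) η) 1
            (fourierT (Measure.map Z₂ ℙ) η)
          calc ‖fourierT (Measure.map Z₁ ℙ) η - fourierT (Measure.map Z₂ ℙ) η‖
              = ‖(fourierT (Measure.map Z₁ ℙ) η - 1)
                - (fourierT (Measure.map Z₂ ℙ) η - 1)‖ := by ring_nf
            _ ≤ _ := by
                refine (norm_sub_le _ _).trans ?_
                simp [map_sub]
      _ ≤ |η| + |η| := add_le_add (char_sub_one hZ₁ hZ₁b η) (char_sub_one hZ₂ hZ₂b η)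
      _ = 2 * |η| := by ring
  rw [d1]
  refine ciSup_le fun ⟨ξ, hξ⟩ => ?_
  have hξpos : (0:ℝ) < |ξ| := abs_pos.mpr hξ
  rw [div_le_iff₀ hξpos]
  -- factorize both sides
  rw [side_factor μ ξ hZ₁ hB₁ hind₁, side_factor μ ξ hZ₂ hB₂ hind₂, hB₁law, hB₂law]
  set f : ℝ → ℂ := fun x => Complex.exp (-(Complex.I * (ξ:ℂ) * ((μ:ℂ) * (2*(x:ℂ) - 1))))
    with hf_def
  have hfm : Measurable f := by fun_prop
  have hfb : ∀ x, ‖f x‖ ≤ 1 := fun x => le_of_eq (abs_exp_eq_one (by simp))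
  have hp₁0 : 0 ≤ (1 - m₁)/2 := by linarith [hm₁b.2]
  have hp₁1 : (1 - m₁)/2 ≤ 1 := by linarith [hm₁b.1]
  have hp₂0 : 0 ≤ (1 - m₂)/2 := by linarith [hm₂b.2]
  have hp₂1 : (1 - m₂)/2 ≤ 1 := by linarith [hm₂b.1]
  rw [integral_bernoulliReal hp₁0 hp₁1 f hfm hfb, integral_bernoulliReal hp₂0 hp₂1 f hfm hfb]
  set E := f 1
  set F := f 0
  set b₁ := fourierT (Measure.map Z₁ ℙ) ((1-μ)*ξ)
  set b₂ := fourierT (Measure.map Z₂ ℙ) ((1-μ)*ξ)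
  set a₁ : ℂ := (((1 - m₁)/2 : ℝ):ℂ) * E + ((1 - (1 - m₁)/2 : ℝ):ℂ) * F with ha₁
  set a₂ : ℂ := (((1 - m₂)/2 : ℝ):ℂ) * E + ((1 - (1 - m₂)/2 : ℝ):ℂ) * F with ha₂
  -- bounds on the pieces
  have ha₁abs : ‖a₁‖ ≤ 1 := by
    rw [ha₁]
    calc ‖(((1 - m₁)/2 : ℝ):ℂ) * E + ((1 - (1 - m₁)/2 : ℝ):ℂ) * F‖
        ≤ ‖(((1 - m₁)/2 : ℝ):ℂ) * E‖
          + ‖((1 - (1 - m₁)/2 : ℝ):ℂ) * F‖ := norm_add_le _ _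
      _ ≤ (1 - m₁)/2 * 1 + (1 - (1 - m₁)/2) * 1 := by
          rw [norm_mul, norm_mul, Complex.norm_real, Complex.norm_real, Real.norm_eq_abs, Real.norm_eq_abs,
            abs_of_nonneg hp₁0, abs_of_nonneg (by linarith)]
          exact add_le_add (mul_le_mul_of_nonneg_left (hfb 1) hp₁0)
            (mul_le_mul_of_nonneg_left (hfb 0) (by linarith))
      _ = 1 := by ring
  have hb₂abs : ‖b₂‖ ≤ 1 := char_abs_le_one hZ₂ _
  -- difference of the Bernoulli parts
  have haE : ‖E - F‖ ≤ 2 * (|ξ| * μ) := by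
    have hE : E = Complex.exp (((-(ξ*μ) : ℝ):ℂ) * Complex.I) := by
      show f 1 = _
      rw [hf_def]; simp only; congr 1; push_cast; ring
    have hF : F = Complex.exp ((-(-(ξ*μ) : ℝ):ℂ) * Complex.I) := by
      show f 0 = _
      rw [hf_def]; simp only; congr 1; push_cast; ring
    rw [hE, hF]
    have := exp_I_sub_exp_neg (-(ξ*μ))
    rw [show ((-(-(ξ*μ):ℝ)):ℂ) = -((-(ξ*μ):ℝ):ℂ) by push_cast; ring] at *
    rw [this]
    have h1 : |Real.sin (-(ξ*μ))| ≤ |(-(ξ*μ))| := Real.abs_sin_le_abs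
    have h2 : |(-(ξ*μ))| = |ξ| * μ := by
      rw [abs_neg, abs_mul, abs_of_nonneg (le_of_lt hμ0)]
    linarith
  have hadiff : ‖a₁ - a₂‖ ≤ μ * |m₁ - m₂| * |ξ| := by
    have h : a₁ - a₂ = (((m₂ - m₁)/2 : ℝ):ℂ) * (E - F) := by
      rw [ha₁, ha₂]; push_cast; ring
    rw [h, norm_mul, Complex.norm_real, Real.norm_eq_abs]
    calc |(m₂ - m₁)/2| * ‖E - F‖ ≤ |(m₂ - m₁)/2| * (2 * (|ξ| * μ)) :=
        mul_le_mul_of_nonneg_left haE (abs_nonneg _)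
      _ = μ * |m₁ - m₂| * |ξ| := by
          rw [abs_div, abs_two, show |m₂ - m₁| = |m₁ - m₂| from abs_sub_comm _ _]
          ring
  -- difference of the Z parts
  have hbdiff : ‖b₁ - b₂‖
      ≤ d1 (Measure.map Z₁ ℙ) (Measure.map Z₂ ℙ) * ((1-μ) * |ξ|) := by
    have hne : (1-μ)*ξ ≠ 0 := mul_ne_zero (by linarith) hξ
    have := le_ciSup hd1_bdd (⟨(1-μ)*ξ, hne⟩ : {η : ℝ // η ≠ 0})
    rw [div_le_iff₀ (abs_pos.mpr hne)] at this
    calc ‖b₁ - b₂‖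
        ≤ d1 (Measure.map Z₁ ℙ) (Measure.map Z₂ ℙ) * |(1-μ)*ξ| := this
      _ = d1 (Measure.map Z₁ ℙ) (Measure.map Z₂ ℙ) * ((1-μ) * |ξ|) := by
          rw [abs_mul, abs_of_nonneg (by linarith : (0:ℝ) ≤ 1-μ)]
  -- combine
  calc ‖a₁ * b₁ - a₂ * b₂‖
      ≤ ‖a₁ * (b₁ - b₂)‖ + ‖(a₁ - a₂) * b₂‖ := by
        have h : a₁ * b₁ - a₂ * b₂ = a₁ * (b₁ - b₂) + (a₁ - a₂) * b₂ := by ring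
        rw [h]; exact norm_add_le _ _
    _ ≤ 1 * (d1 (Measure.map Z₁ ℙ) (Measure.map Z₂ ℙ) * ((1-μ) * |ξ|))
        + (μ * |m₁ - m₂| * |ξ|) * 1 := by
        rw [norm_mul, norm_mul]
        exact add_le_add (mul_le_mul ha₁abs hbdiff (norm_nonneg _) zero_le_one)
          (mul_le_mul hadiff hb₂abs (norm_nonneg _)
            (by positivity))
    _ ≤ (μ * |m₁ - m₂| + (1 - μ) * d1 (Measure.map Z₁ ℙ) (Measure.map Z₂ ℙ)) * |ξ| := by
        ring_nf
        nlinarith [abs_nonneg ξ]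
end

section
/- Let μ₋, μ₊ ∈ (0,1] and m∞ = (√μ₊ - √μ₋)/(√μ₊ + √μ₋). Then there exists a unique probability measure ρ∞ on [-1,1] such that if Z ~ ρ∞ and B ~ Bernoulli((1-m∞)/2) is independent of Z, then B((1-μ₊)Z + μ₊) + (1-B)((1-μ₋)Z - μ₋) also has law ρ∞. -/
open MeasureTheory

open Set Filter Topology

namespace Stmt19X


noncomputable def T (p a₁ b₁ a₂ b₂ : ℝ) (ρ : Measure ℝ) : Measure ℝ :=
  ENNReal.ofReal p • ρ.map (fun z => a₁ * z + b₁) +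
    ENNReal.ofReal (1 - p) • ρ.map (fun z => a₂ * z + b₂)

noncomputable def Psi (a b : ℝ) (G : ℝ → ℝ) (x : ℝ) : ℝ :=
  if 0 < a then G ((x - b) / a) else if b ≤ x then 1 else 0

lemma measurable_aff (a b : ℝ) : Measurable (fun z : ℝ => a * z + b) :=
  (measurable_id.const_mul a).add_const b

lemma map_aff_Iic_pos {a : ℝ} (ha : 0 < a) (b : ℝ) (ρ : Measure ℝ) (x : ℝ) :
    ρ.map (fun z => a * z + b) (Iic x) = ρ (Iic ((x - b) / a)) := by
  rw [Measure.map_apply (measurable_aff a b) measurableSet_Iic]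
  congr 1
  ext z
  simp only [mem_preimage, mem_Iic, le_div_iff₀ ha]
  constructor <;> intro h <;> nlinarith

lemma map_aff_Iic_zero (b : ℝ) (ρ : Measure ℝ) (x : ℝ) :
    ρ.map (fun z => (0:ℝ) * z + b) (Iic x) = if b ≤ x then ρ univ else 0 := by
  rw [Measure.map_apply (measurable_aff 0 b) measurableSet_Iic]
  split_ifs with h
  · congr 1; ext z; simp [h]
  · rw [show (fun z : ℝ => 0 * z + b) ⁻¹' Iic x = ∅ by ext z; simp [h]]
    simp

lemma cdf_map_aff {a : ℝ} (ha : 0 ≤ a) (b : ℝ) (ρ : Measure ℝ) [IsProbabilityMeasure ρ] (x : ℝ) :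
    (ρ.map (fun z => a * z + b) (Iic x)).toReal
      = Psi a b (fun y => (ρ (Iic y)).toReal) x := by
  rcases ha.lt_or_eq with h | h
  · rw [map_aff_Iic_pos h, Psi, if_pos h]
  · subst h
    rw [map_aff_Iic_zero, Psi, if_neg (lt_irrefl 0)]
    split_ifs <;> simp

lemma cdf_T {p a₁ b₁ a₂ b₂ : ℝ} (hp0 : 0 ≤ p) (hp1 : p ≤ 1) (ha₁ : 0 ≤ a₁) (ha₂ : 0 ≤ a₂)
    (ρ : Measure ℝ) [IsProbabilityMeasure ρ] (x : ℝ) :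
    ((T p a₁ b₁ a₂ b₂ ρ) (Iic x)).toReal
      = p * Psi a₁ b₁ (fun y => (ρ (Iic y)).toReal) x
        + (1 - p) * Psi a₂ b₂ (fun y => (ρ (Iic y)).toReal) x := by
  haveI h1 : IsProbabilityMeasure (ρ.map (fun z => a₁ * z + b₁)) :=
    Measure.isProbabilityMeasure_map (measurable_aff a₁ b₁).aemeasurable
  haveI h2 : IsProbabilityMeasure (ρ.map (fun z => a₂ * z + b₂)) :=
    Measure.isProbabilityMeasure_map (measurable_aff a₂ b₂).aemeasurable
  rw [T, Measure.add_apply, Measure.smul_apply, Measure.smul_apply, smul_eq_mul, smul_eq_mul,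
    ENNReal.toReal_add (by finiteness) (by finiteness), ENNReal.toReal_mul, ENNReal.toReal_mul,
    ENNReal.toReal_ofReal hp0, ENNReal.toReal_ofReal (by linarith),
    cdf_map_aff ha₁, cdf_map_aff ha₂]




lemma ofReal_p_add {p : ℝ} (hp0 : 0 ≤ p) (hp1 : p ≤ 1) :
    ENNReal.ofReal p + ENNReal.ofReal (1 - p) = 1 := by
  rw [← ENNReal.ofReal_add hp0 (by linarith)]
  norm_num

lemma isProb_T {p a₁ b₁ a₂ b₂ : ℝ} (hp0 : 0 ≤ p) (hp1 : p ≤ 1)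
    (ρ : Measure ℝ) [IsProbabilityMeasure ρ] :
    IsProbabilityMeasure (T p a₁ b₁ a₂ b₂ ρ) := by
  constructor
  rw [T, Measure.add_apply, Measure.smul_apply, Measure.smul_apply,
    Measure.map_apply (measurable_aff a₁ b₁) MeasurableSet.univ,
    Measure.map_apply (measurable_aff a₂ b₂) MeasurableSet.univ]
  simp [ofReal_p_add hp0 hp1]

lemma aff_mem_Icc {a b : ℝ} (ha : 0 ≤ a) (hb : |b| ≤ 1 - a) {z : ℝ} (hz : z ∈ Icc (-1:ℝ) 1) :
    a * z + b ∈ Icc (-1:ℝ) 1 := by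
  rw [abs_le] at hb
  obtain ⟨hz1, hz2⟩ := hz
  constructor <;> nlinarith

lemma supp_T {p a₁ b₁ a₂ b₂ : ℝ} (hp0 : 0 ≤ p) (hp1 : p ≤ 1)
    (ha₁ : 0 ≤ a₁) (hb₁ : |b₁| ≤ 1 - a₁) (ha₂ : 0 ≤ a₂) (hb₂ : |b₂| ≤ 1 - a₂)
    (ρ : Measure ℝ) [IsProbabilityMeasure ρ] (hs : ρ (Icc (-1:ℝ) 1) = 1) :
    T p a₁ b₁ a₂ b₂ ρ (Icc (-1:ℝ) 1) = 1 := by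
  have key : ∀ a b : ℝ, 0 ≤ a → |b| ≤ 1 - a →
      ρ.map (fun z => a * z + b) (Icc (-1:ℝ) 1) = 1 := by
    intro a b ha hb
    rw [Measure.map_apply (measurable_aff a b) measurableSet_Icc]
    refine le_antisymm prob_le_one ?_
    rw [← hs]
    exact measure_mono fun z hz => aff_mem_Icc ha hb hz
  rw [T, Measure.add_apply, Measure.smul_apply, Measure.smul_apply, key a₁ b₁ ha₁ hb₁,
    key a₂ b₂ ha₂ hb₂]
  simp [ofReal_p_add hp0 hp1]

lemma Iic_eq_zero {ρ : Measure ℝ} [IsProbabilityMeasure ρ] (hs : ρ (Icc (-1:ℝ) 1) = 1)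
    {x : ℝ} (hx : x < -1) : ρ (Iic x) = 0 := by
  have hc : ρ (Icc (-1:ℝ) 1)ᶜ = 0 := by
    rw [measure_compl measurableSet_Icc (measure_ne_top _ _), hs, measure_univ, tsub_self]
  refine measure_mono_null (fun z hz => ?_) hc
  simp only [mem_compl_iff, mem_Icc, not_and_or, not_le]
  exact Or.inl (lt_of_le_of_lt hz hx)

lemma Iic_eq_one {ρ : Measure ℝ} [IsProbabilityMeasure ρ] (hs : ρ (Icc (-1:ℝ) 1) = 1)
    {x : ℝ} (hx : 1 ≤ x) : ρ (Iic x) = 1 := by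
  refine le_antisymm prob_le_one ?_
  rw [← hs]
  exact measure_mono fun z hz => le_trans hz.2 hx




lemma map_eq_T (p μp μm : ℝ) (ρ : Measure ℝ) [IsProbabilityMeasure ρ] :
    Measure.map (fun q : ℝ × ℝ => q.1 * ((1 - μp) * q.2 + μp) + (1 - q.1) * ((1 - μm) * q.2 - μm))
        ((bernoulliReal p).prod ρ)
      = T p (1 - μp) μp (1 - μm) (-μm) ρ := by
  set g : ℝ × ℝ → ℝ :=
    fun q => q.1 * ((1 - μp) * q.2 + μp) + (1 - q.1) * ((1 - μm) * q.2 - μm) with hg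
  have hgm : Measurable g := by
    apply Measurable.add
    · exact measurable_fst.mul ((measurable_snd.const_mul _).add_const _)
    · exact (measurable_const.sub measurable_fst).mul ((measurable_snd.const_mul _).sub_const _)
  refine Measure.ext fun s hs => ?_
  rw [Measure.map_apply hgm hs, bernoulliReal, Measure.prod_apply (hgm hs)]
  have hmeas : Measurable fun x : ℝ => ρ (Prod.mk x ⁻¹' (g ⁻¹' s)) :=
    measurable_measure_prodMk_left (hgm hs)
  rw [lintegral_add_measure, lintegral_smul_measure, lintegral_smul_measure,
    lintegral_dirac' _ hmeas, lintegral_dirac' _ hmeas]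
  have e1 : Prod.mk (1:ℝ) ⁻¹' (g ⁻¹' s) = (fun z => (1 - μp) * z + μp) ⁻¹' s := by
    ext z; simp only [mem_preimage, hg]; ring_nf
  have e0 : Prod.mk (0:ℝ) ⁻¹' (g ⁻¹' s) = (fun z => (1 - μm) * z + -μm) ⁻¹' s := by
    ext z; simp only [mem_preimage, hg]; ring_nf
  rw [e1, e0, T, Measure.add_apply, Measure.smul_apply, Measure.smul_apply,
    Measure.map_apply (measurable_aff _ _) hs, Measure.map_apply (measurable_aff _ _) hs,
    smul_eq_mul, smul_eq_mul]




lemma cdf_mono (ρ : Measure ℝ) [IsProbabilityMeasure ρ] :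
    Monotone (fun y => (ρ (Iic y)).toReal) := fun u v huv =>
  ENNReal.toReal_mono (measure_ne_top _ _) (measure_mono (Iic_subset_Iic.mpr huv))

lemma cdf_nonneg' (ρ : Measure ℝ) (y : ℝ) : 0 ≤ (ρ (Iic y)).toReal := ENNReal.toReal_nonneg

lemma cdf_le_one' (ρ : Measure ℝ) [IsProbabilityMeasure ρ] (y : ℝ) :
    (ρ (Iic y)).toReal ≤ 1 := by
  have h := prob_le_one (μ := ρ) (s := Iic y)
  simpa using ENNReal.toReal_mono ENNReal.one_ne_top h

lemma contraction_lt_one {p a₁ a₂ : ℝ} (hp0 : 0 ≤ p) (hp1 : p ≤ 1)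
    (ha₁ : 0 ≤ a₁) (ha₁' : a₁ < 1) (ha₂ : 0 ≤ a₂) (ha₂' : a₂ < 1) :
    p * a₁ + (1 - p) * a₂ < 1 := by
  rcases hp0.lt_or_eq with h | h
  · nlinarith
  · rw [← h]; nlinarith

lemma uniq {p a₁ b₁ a₂ b₂ : ℝ} (hp0 : 0 ≤ p) (hp1 : p ≤ 1)
    (ha₁ : 0 ≤ a₁) (ha₁' : a₁ < 1) (ha₂ : 0 ≤ a₂) (ha₂' : a₂ < 1)
    (ρ σ : Measure ℝ) [IsProbabilityMeasure ρ] [IsProbabilityMeasure σ]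
    (hρs : ρ (Icc (-1:ℝ) 1) = 1) (hσs : σ (Icc (-1:ℝ) 1) = 1)
    (hρf : T p a₁ b₁ a₂ b₂ ρ = ρ) (hσf : T p a₁ b₁ a₂ b₂ σ = σ) : σ = ρ := by
  classical
  set Fρ : ℝ → ℝ := fun y => (ρ (Iic y)).toReal with hFρ
  set Fσ : ℝ → ℝ := fun y => (σ (Iic y)).toReal with hFσ
  set D : ℝ → ℝ := fun x => Fρ x - Fσ x with hD
  have hfixρ : ∀ x, Fρ x = p * Psi a₁ b₁ Fρ x + (1 - p) * Psi a₂ b₂ Fρ x := by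
    intro x
    have h := cdf_T (b₁ := b₁) (b₂ := b₂) hp0 hp1 ha₁ ha₂ ρ x
    rw [hρf] at h
    exact h
  have hfixσ : ∀ x, Fσ x = p * Psi a₁ b₁ Fσ x + (1 - p) * Psi a₂ b₂ Fσ x := by
    intro x
    have h := cdf_T (b₁ := b₁) (b₂ := b₂) hp0 hp1 ha₁ ha₂ σ x
    rw [hσf] at h
    exact h
  have hstep : ∀ x, D x = p * (if 0 < a₁ then D ((x - b₁) / a₁) else 0)
      + (1 - p) * (if 0 < a₂ then D ((x - b₂) / a₂) else 0) := by
    intro x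
    have h1 := hfixρ x
    have h2 := hfixσ x
    simp only [Psi] at h1 h2
    simp only [hD]
    split_ifs at h1 h2 ⊢ <;> linarith
  have hFρm : Measurable Fρ := (cdf_mono ρ).measurable
  have hFσm : Measurable Fσ := (cdf_mono σ).measurable
  have hDm : Measurable D := hFρm.sub hFσm
  have hD0 : ∀ x, x ∉ Icc (-1:ℝ) 1 → D x = 0 := by
    intro x hx
    rw [mem_Icc, not_and_or, not_le, not_le] at hx
    rcases hx with hx | hx
    · simp only [hD, hFρ, hFσ, Iic_eq_zero hρs hx, Iic_eq_zero hσs hx, sub_self]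
    · simp only [hD, hFρ, hFσ, Iic_eq_one hρs hx.le, Iic_eq_one hσs hx.le, sub_self]
  have hDbd : ∀ x, |D x| ≤ indicator (Icc (-1:ℝ) 1) (fun _ => (1:ℝ)) x := by
    intro x
    by_cases hx : x ∈ Icc (-1:ℝ) 1
    · rw [indicator_of_mem hx]
      have h1 := cdf_nonneg' ρ x
      have h2 := cdf_le_one' ρ x
      have h3 := cdf_nonneg' σ x
      have h4 := cdf_le_one' σ x
      rw [abs_le]
      constructor <;> simp only [hD, hFρ, hFσ] <;> [linarith; linarith]
    · rw [indicator_of_notMem hx, hD0 x hx, abs_zero]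
  have hint : Integrable D volume := by
    have hg : Integrable (indicator (Icc (-1:ℝ) 1) (fun _ => (1:ℝ))) volume :=
      (integrable_indicator_iff measurableSet_Icc).mpr
        (integrableOn_const measure_Icc_lt_top.ne)
    refine hg.mono' hDm.aestronglyMeasurable (ae_of_all _ fun x => ?_)
    rw [Real.norm_eq_abs]; exact hDbd x
  have habs : Integrable (fun x => |D x|) volume := hint.abs
  set J := ∫ x, |D x| with hJ
  have hJnn : 0 ≤ J := integral_nonneg fun x => abs_nonneg _
  have key : ∀ a b : ℝ, 0 ≤ a →
      Integrable (fun x => |if 0 < a then D ((x - b) / a) else 0|) volume ∧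
        (∫ x, |if 0 < a then D ((x - b) / a) else 0|) = a * J := by
    intro a b ha
    by_cases h : 0 < a
    · simp only [if_pos h]
      have hcomp : (fun x : ℝ => |D ((x - b) / a)|) = fun x => (fun y => |D (y / a)|) (x - b) :=
        rfl
      have hint2 : Integrable (fun y : ℝ => |D (y / a)|) volume := habs.comp_div h.ne'
      constructor
      · rw [hcomp]; exact hint2.comp_sub_right b
      · rw [hcomp, integral_sub_right_eq_self (fun y => |D (y / a)|) b,
          Measure.integral_comp_div (fun y => |D y|) a, smul_eq_mul, abs_of_pos h]
    · have ha0 : a = 0 := le_antisymm (not_lt.mp h) ha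
      simp only [if_neg h, abs_zero]
      exact ⟨integrable_zero _ _ _, by simp [ha0]⟩
  obtain ⟨hi1, he1⟩ := key a₁ b₁ ha₁
  obtain ⟨hi2, he2⟩ := key a₂ b₂ ha₂
  have hmono : J ≤ ∫ x, (p * |if 0 < a₁ then D ((x - b₁) / a₁) else 0|
      + (1 - p) * |if 0 < a₂ then D ((x - b₂) / a₂) else 0|) := by
    refine integral_mono habs ((hi1.const_mul p).add (hi2.const_mul (1 - p))) fun x => ?_
    rw [hstep x]
    calc |p * _ + (1 - p) * _| ≤ |p * _| + |(1 - p) * _| := abs_add_le _ _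
    _ = p * _ + (1 - p) * _ := by
        rw [abs_mul, abs_mul, abs_of_nonneg hp0, abs_of_nonneg (by linarith : (0:ℝ) ≤ 1 - p)]
  rw [integral_add (hi1.const_mul p) (hi2.const_mul (1 - p)), integral_const_mul,
    integral_const_mul, he1, he2] at hmono
  have hclt := contraction_lt_one hp0 hp1 ha₁ ha₁' ha₂ ha₂'
  have hJ0 : J = 0 := by nlinarith
  have hae : ∀ᵐ x, |D x| = 0 :=
    (integral_eq_zero_iff_of_nonneg (fun x => abs_nonneg _) habs).mp hJ0
  have hpt : ∀ x, Fρ x = Fσ x := by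
    intro x
    set L := (𝓝[>] x) ⊓ 𝓟 {y | D y = 0} with hL
    have hne : L.NeBot := by
      rw [hL, inf_principal_neBot_iff]
      intro U hU
      obtain ⟨u, hu, hsub⟩ := mem_nhdsGT_iff_exists_Ioc_subset.mp hU
      by_contra hemp
      rw [not_nonempty_iff_eq_empty] at hemp
      have hsub2 : Ioc x u ⊆ {y | ¬ |D y| = 0} := by
        intro y hy h0
        have hyU : y ∈ U := hsub hy
        have : y ∈ U ∩ {y | D y = 0} := ⟨hyU, abs_eq_zero.mp h0⟩
        rw [hemp] at this
        exact this
      have h0 : volume (Ioc x u) = 0 := measure_mono_null hsub2 (ae_iff.mp hae)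
      rw [Real.volume_Ioc] at h0
      have : (0:ℝ) < u - x := by simp only [mem_Ioi] at hu; linarith
      simp [ENNReal.ofReal_eq_zero, not_le.mpr this] at h0
    have hev : Fρ =ᶠ[L] Fσ := by
      have hmem : {y | D y = 0} ∈ L := mem_inf_of_right (mem_principal_self _)
      filter_upwards [hmem] with y hy
      exact sub_eq_zero.mp hy
    have hLle : ∀ ρ' : Measure ℝ, ∀ _ : IsProbabilityMeasure ρ',
        Tendsto (fun y => (ρ' (Iic y)).toReal) L (𝓝 ((ρ' (Iic x)).toReal)) := by
      intro ρ' hρ'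
      have hFeq : (fun y => (ρ' (Iic y)).toReal) = fun y => ProbabilityTheory.cdf ρ' y :=
        funext fun y => (ProbabilityTheory.cdf_eq_real ρ' y).symm
      rw [hFeq, ← measureReal_def, ← ProbabilityTheory.cdf_eq_real]
      have h1 : Tendsto (ProbabilityTheory.cdf ρ') (𝓝[Ici x] x)
          (𝓝 (ProbabilityTheory.cdf ρ' x)) := (ProbabilityTheory.cdf ρ').right_continuous x
      refine h1.mono_left ?_
      rw [hL]
      exact le_trans inf_le_left (nhdsWithin_mono x Ioi_subset_Ici_self)
    have hcρ := hLle ρ inferInstance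
    have hcσ := hLle σ inferInstance
    exact tendsto_nhds_unique (hcρ.congr' hev) hcσ
  refine MeasureTheory.Measure.ext_of_Iic σ ρ fun x => ?_
  exact (ENNReal.toReal_eq_toReal_iff' (measure_ne_top _ _) (measure_ne_top _ _)).mp (hpt x).symm




lemma Psi_mono {a b : ℝ} {G H : ℝ → ℝ} (h : ∀ y, G y ≤ H y) (x : ℝ) :
    Psi a b G x ≤ Psi a b H x := by
  unfold Psi; split_ifs with h1 h2
  · exact h _
  · exact le_rfl
  · exact le_rfl

lemma exists_fixed {p a₁ b₁ a₂ b₂ : ℝ} (hp0 : 0 ≤ p) (hp1 : p ≤ 1)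
    (ha₁ : 0 ≤ a₁) (ha₁' : a₁ < 1) (hb₁ : |b₁| ≤ 1 - a₁)
    (ha₂ : 0 ≤ a₂) (ha₂' : a₂ < 1) (hb₂ : |b₂| ≤ 1 - a₂) :
    ∃ ρ : Measure ℝ, IsProbabilityMeasure ρ ∧ ρ (Icc (-1:ℝ) 1) = 1 ∧
      T p a₁ b₁ a₂ b₂ ρ = ρ := by
  classical
  set ν : ℕ → Measure ℝ := fun n => (T p a₁ b₁ a₂ b₂)^[n] (Measure.dirac (-1)) with hν
  have hsucc : ∀ n, ν (n + 1) = T p a₁ b₁ a₂ b₂ (ν n) := fun n =>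
    Function.iterate_succ_apply' _ n _
  have hprob : ∀ n, IsProbabilityMeasure (ν n) := by
    intro n
    induction n with
    | zero => exact Measure.dirac.isProbabilityMeasure
    | succ k ih => rw [hsucc]; exact @isProb_T _ _ _ _ _ hp0 hp1 _ ih
  have hsupp : ∀ n, ν n (Icc (-1:ℝ) 1) = 1 := by
    intro n
    induction n with
    | zero =>
      show Measure.dirac (-1:ℝ) _ = 1
      rw [Measure.dirac_apply_of_mem (by constructor <;> norm_num)]
    | succ k ih =>
      haveI := hprob k
      rw [hsucc]; exact supp_T hp0 hp1 ha₁ hb₁ ha₂ hb₂ _ ih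
  set G : ℕ → ℝ → ℝ := fun n x => ((ν n) (Iic x)).toReal with hG
  have hG0 : ∀ n x, 0 ≤ G n x := fun n x => ENNReal.toReal_nonneg
  have hG1 : ∀ n x, G n x ≤ 1 := fun n x => @cdf_le_one' _ (hprob n) x
  have hGmono : ∀ n, Monotone (G n) := fun n => @cdf_mono _ (hprob n)
  have hGrec : ∀ n x, G (n + 1) x = p * Psi a₁ b₁ (G n) x + (1 - p) * Psi a₂ b₂ (G n) x := by
    intro n x
    have := @cdf_T p a₁ b₁ a₂ b₂ hp0 hp1 ha₁ ha₂ (ν n) (hprob n) x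
    rw [← hsucc] at this
    exact this
  have hanti : ∀ n x, G (n + 1) x ≤ G n x := by
    intro n
    induction n with
    | zero =>
      intro x
      by_cases hx : -1 ≤ x
      · have : G 0 x = 1 := by
          simp only [hG, hν, Function.iterate_zero, id_eq]
          rw [Measure.dirac_apply_of_mem (mem_Iic.mpr hx)]
          simp
        rw [this]; exact hG1 1 x
      · push_neg at hx
        have h0 : ν 1 (Iic x) = 0 := @Iic_eq_zero _ (hprob 1) (hsupp 1) _ hx
        have : G 1 x = 0 := by simp only [hG, h0, ENNReal.toReal_zero]
        rw [this]; exact hG0 0 x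
    | succ k ih =>
      intro x
      rw [hGrec, hGrec]
      have h1 := Psi_mono (a := a₁) (b := b₁) ih x
      have h2 := Psi_mono (a := a₂) (b := b₂) ih x
      have := mul_le_mul_of_nonneg_left h1 hp0
      have := mul_le_mul_of_nonneg_left h2 (by linarith : (0:ℝ) ≤ 1 - p)
      linarith
  have hantiN : ∀ x, Antitone fun n => G n x := fun x =>
    antitone_nat_of_succ_le fun n => hanti n x
  have hbdd : ∀ x, BddBelow (range fun n => G n x) := fun x =>
    ⟨0, by rintro r ⟨n, rfl⟩; exact hG0 n x⟩
  set F : ℝ → ℝ := fun x => ⨅ n, G n x with hF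
  have hFtendsto : ∀ x, Tendsto (fun n => G n x) atTop (𝓝 (F x)) := fun x =>
    tendsto_atTop_ciInf (hantiN x) (hbdd x)
  have hFle : ∀ (n : ℕ) (x : ℝ), F x ≤ G n x := fun n x => ciInf_le (hbdd x) n
  have hF0 : ∀ x, 0 ≤ F x := fun x => le_ciInf fun n => hG0 n x
  have hF1 : ∀ x, F x ≤ 1 := fun x => (hFle 0 x).trans (hG1 0 x)
  have hFmono : Monotone F := fun u v huv =>
    le_ciInf fun n => (hFle n u).trans (hGmono n huv)
  have hFrec : ∀ x, F x = p * Psi a₁ b₁ F x + (1 - p) * Psi a₂ b₂ F x := by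
    intro x
    have hPsiT : ∀ a b : ℝ, Tendsto (fun n => Psi a b (G n) x) atTop (𝓝 (Psi a b F x)) := by
      intro a b
      by_cases h : 0 < a
      · simp only [Psi, if_pos h]; exact hFtendsto _
      · simp only [Psi, if_neg h]; exact tendsto_const_nhds
    have h1 : Tendsto (fun n => G (n + 1) x) atTop (𝓝 (F x)) :=
      (hFtendsto x).comp (tendsto_add_atTop_nat 1)
    have h2 : Tendsto (fun n => G (n + 1) x) atTop
        (𝓝 (p * Psi a₁ b₁ F x + (1 - p) * Psi a₂ b₂ F x)) := by
      have h3 := ((hPsiT a₁ b₁).const_mul p).add ((hPsiT a₂ b₂).const_mul (1 - p))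
      exact h3.congr fun n => (hGrec n x).symm
    exact tendsto_nhds_unique h1 h2
  have hG0low : ∀ x : ℝ, x < -1 → G 0 x = 0 := by
    intro x hx
    have h0 : ν 0 (Iic x) = 0 := @Iic_eq_zero _ (hprob 0) (hsupp 0) _ hx
    simp only [hG, h0, ENNReal.toReal_zero]
  have hFlow : ∀ x : ℝ, x < -1 → F x = 0 := fun x hx =>
    le_antisymm ((hFle 0 x).trans_eq (hG0low x hx)) (hF0 x)
  have hFhigh : ∀ x : ℝ, 1 ≤ x → F x = 1 := by
    intro x hx
    have hc : ∀ n, G n x = 1 := fun n => by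
      simp only [hG]; rw [@Iic_eq_one _ (hprob n) (hsupp n) _ hx]; simp
    simp only [hF, hc, ciInf_const]
  set φ := hFmono.stieltjesFunction with hφ
  have hφeq : ∀ x, φ x = Function.rightLim F x := fun x => hFmono.stieltjesFunction_eq x
  have hφlow : ∀ x : ℝ, x < -1 → φ x = 0 := by
    intro x hx
    rw [hφeq]
    refine rightLim_eq_of_tendsto ?_
    refine Tendsto.congr' ?_ tendsto_const_nhds
    filter_upwards [Ioo_mem_nhdsGT hx] with y hy
    exact (hFlow y hy.2).symm
  have hφhigh : ∀ x : ℝ, 1 ≤ x → φ x = 1 := by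
    intro x hx
    rw [hφeq]
    refine rightLim_eq_of_tendsto ?_
    refine Tendsto.congr' ?_ tendsto_const_nhds
    filter_upwards [self_mem_nhdsWithin] with y hy
    exact (hFhigh y (hx.trans (le_of_lt hy))).symm
  have hφ0 : ∀ x, 0 ≤ φ x := fun x => (hF0 x).trans (hFmono.le_rightLim le_rfl)
  have hbot : Tendsto (⇑φ) atBot (𝓝 0) := by
    refine Tendsto.congr' ?_ tendsto_const_nhds
    filter_upwards [eventually_lt_atBot (-1:ℝ)] with x hx
    exact (hφlow x hx).symm
  have htop : Tendsto (⇑φ) atTop (𝓝 1) := by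
    refine Tendsto.congr' ?_ tendsto_const_nhds
    filter_upwards [eventually_ge_atTop (1:ℝ)] with x hx
    exact (hφhigh x hx).symm
  have hφrec : ∀ x, φ x = p * Psi a₁ b₁ (⇑φ) x + (1 - p) * Psi a₂ b₂ (⇑φ) x := by
    intro x
    have hterm : ∀ a b : ℝ, Tendsto (fun y => Psi a b F y) (𝓝[>] x) (𝓝 (Psi a b (⇑φ) x)) := by
      intro a b
      by_cases h : 0 < a
      · simp only [Psi, if_pos h]
        have hmap : Tendsto (fun y => (y - b) / a) (𝓝[>] x) (𝓝[>] ((x - b) / a)) := by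
          refine tendsto_nhdsWithin_of_tendsto_nhds_of_eventually_within _ ?_ ?_
          · exact (((continuous_id.sub continuous_const).div_const a).tendsto x).mono_left
              nhdsWithin_le_nhds
          · filter_upwards [self_mem_nhdsWithin] with y hy
            have hxy : x < y := hy
            exact mem_Ioi.mpr (by gcongr)
        have h4 := (hFmono.tendsto_rightLim ((x - b) / a)).comp hmap
        rw [hφeq]
        exact h4
      · simp only [Psi, if_neg h]
        by_cases hbx : b ≤ x
        · rw [if_pos hbx]
          refine Tendsto.congr' ?_ tendsto_const_nhds
          filter_upwards [self_mem_nhdsWithin] with y hy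
          rw [if_pos (hbx.trans (le_of_lt hy))]
        · push_neg at hbx
          rw [if_neg (not_le.mpr hbx)]
          refine Tendsto.congr' ?_ tendsto_const_nhds
          filter_upwards [Ioo_mem_nhdsGT hbx] with y hy
          rw [if_neg (not_le.mpr hy.2)]
    have hmain : Tendsto F (𝓝[>] x) (𝓝 (Function.rightLim F x)) := hFmono.tendsto_rightLim x
    have hcomb : Tendsto F (𝓝[>] x)
        (𝓝 (p * Psi a₁ b₁ (⇑φ) x + (1 - p) * Psi a₂ b₂ (⇑φ) x)) := by
      have h5 := ((hterm a₁ b₁).const_mul p).add ((hterm a₂ b₂).const_mul (1 - p))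
      exact h5.congr fun y => (hFrec y).symm
    rw [hφeq]
    exact tendsto_nhds_unique hmain hcomb
  haveI hPμ : IsProbabilityMeasure φ.measure := φ.isProbabilityMeasure hbot htop
  have hμIic : ∀ x, φ.measure (Iic x) = ENNReal.ofReal (φ x) := fun x => by
    rw [StieltjesFunction.measure_Iic φ hbot]; simp
  have hμsupp : φ.measure (Icc (-1:ℝ) 1) = 1 := by
    rw [StieltjesFunction.measure_Icc]
    have hleft : Function.leftLim (⇑φ) (-1) = 0 := by
      refine leftLim_eq_of_tendsto ?_
      refine Tendsto.congr' ?_ tendsto_const_nhds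
      filter_upwards [Ioo_mem_nhdsLT (by norm_num : (-2:ℝ) < -1)] with y hy
      exact (hφlow y hy.2).symm
    rw [hleft, hφhigh 1 le_rfl]
    norm_num
  refine ⟨φ.measure, hPμ, hμsupp, ?_⟩
  haveI : IsProbabilityMeasure (T p a₁ b₁ a₂ b₂ φ.measure) := isProb_T hp0 hp1 _
  refine Measure.ext_of_Iic _ _ fun x => ?_
  have h1 := cdf_T (b₁ := b₁) (b₂ := b₂) hp0 hp1 ha₁ ha₂ φ.measure x
  have hcdf : (fun y => (φ.measure (Iic y)).toReal) = ⇑φ := funext fun y => by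
    rw [hμIic, ENNReal.toReal_ofReal (hφ0 y)]
  rw [hcdf] at h1
  have h2 : ((T p a₁ b₁ a₂ b₂ φ.measure) (Iic x)).toReal = φ x := by rw [h1, ← hφrec x]
  rw [hμIic, ← h2, ENNReal.ofReal_toReal (measure_ne_top _ _)]


end Stmt19X

theorem stmt19 (μm μp : ℝ) (hm : μm ∈ Set.Ioc (0:ℝ) 1) (hp : μp ∈ Set.Ioc (0:ℝ) 1)
    (minf : ℝ) (hminf : minf = (Real.sqrt μp - Real.sqrt μm) / (Real.sqrt μp + Real.sqrt μm)) :
    ∃! ρ : Measure ℝ, IsProbabilityMeasure ρ ∧ ρ (Set.Icc (-1:ℝ) 1) = 1 ∧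
      Measure.map (fun q : ℝ × ℝ => q.1 * ((1 - μp) * q.2 + μp) + (1 - q.1) * ((1 - μm) * q.2 - μm))
        ((bernoulliReal ((1 - minf) / 2)).prod ρ) = ρ := by
  have hsp : 0 < Real.sqrt μp := Real.sqrt_pos.mpr hp.1
  have hsm : 0 < Real.sqrt μm := Real.sqrt_pos.mpr hm.1
  set P := (1 - minf) / 2 with hP
  have hminf1 : minf ≤ 1 := by
    rw [hminf, div_le_one (by linarith)]; linarith
  have hminf2 : -1 ≤ minf := by
    rw [hminf, le_div_iff₀ (by linarith)]; linarith
  have hP0 : 0 ≤ P := by rw [hP]; linarith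
  have hP1 : P ≤ 1 := by rw [hP]; linarith
  have ha₁ : 0 ≤ 1 - μp := by linarith [hp.2]
  have ha₁' : 1 - μp < 1 := by linarith [hp.1]
  have hb₁ : |μp| ≤ 1 - (1 - μp) := by rw [abs_of_pos hp.1]; linarith
  have ha₂ : 0 ≤ 1 - μm := by linarith [hm.2]
  have ha₂' : 1 - μm < 1 := by linarith [hm.1]
  have hb₂ : |(-μm)| ≤ 1 - (1 - μm) := by rw [abs_neg, abs_of_pos hm.1]; linarith
  obtain ⟨ρ, hρ1, hρ2, hρ3⟩ := Stmt19X.exists_fixed (p := P) hP0 hP1 ha₁ ha₁' hb₁ ha₂ ha₂' hb₂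
  haveI := hρ1
  refine ⟨ρ, ⟨hρ1, hρ2, ?_⟩, ?_⟩
  · rw [Stmt19X.map_eq_T P μp μm ρ]
    exact hρ3
  · rintro σ ⟨hσ1, hσ2, hσ3⟩
    haveI := hσ1
    refine Stmt19X.uniq hP0 hP1 ha₁ ha₁' ha₂ ha₂' ρ σ hρ2 hσ2 hρ3 ?_
    rw [← Stmt19X.map_eq_T P μp μm σ]
    exact hσ3
end
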